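/- arXiv:1009.2366 — 7 statements merged into one kernel-verified Lean document; each statement's English description precedes it below -/
import Mathlib

section
/- Let v ∈ ℕ^N with v[i] = v[i+1], and let σ_v be the minimal-length permutation with v = v⁺σ_v. Then σ_v s_i = s_{σ_v[i]} σ_v, where s_i acts on the right (positions) and s_{σ_v[i]} acts on the left (values). -/
/-- `σ` is an adjacent transposition `s_i = (i, i+1)`. -/
def IsAdjTrans {N : ℕ} (σ : Equiv.Perm (Fin N)) : Prop :=
  ∃ i j : Fin N, (j : ℕ) = (i : ℕ) + 1 ∧ σ = Equiv.swap i j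

/-- The length of a permutation: the minimal number of adjacent transpositions
needed to write it. -/
noncomputable def permLength {N : ℕ} (σ : Equiv.Perm (Fin N)) : ℕ :=
  sInf {k | ∃ l : List (Equiv.Perm (Fin N)),
    l.length = k ∧ (∀ τ ∈ l, IsAdjTrans τ) ∧ l.prod = σ}

/-- `σ` is the (unique) minimal-length permutation with `v = w ∘ σ`, where `w`
is weakly decreasing, i.e. `w = v⁺` and `σ = σ_v`. -/
def IsMinDecomp {N : ℕ} (v w : Fin N → ℕ) (σ : Equiv.Perm (Fin N)) : Prop :=
  (∀ i j : Fin N, i ≤ j → w j ≤ w i) ∧ (v = fun k => w (σ k)) ∧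
  ∀ σ' : Equiv.Perm (Fin N), (v = fun k => w (σ' k)) →
    permLength σ ≤ permLength σ'

/-!
The length of a permutation of `Fin N` is its number of inversions, and multiplying on the left
by the transposition of two adjacent values `c ⋖ k` changes that number by exactly one. When
`w c = w k` this multiplication preserves `v = w ∘ σ`, so minimality of `σ` forces
`σ⁻¹ c < σ⁻¹ k`; hence `σ⁻¹` is strictly increasing on every interval on which `w` is constant.
As `w (σ i) = w (σ j)`, the adjacent positions `i ⋖ j` are then sent to values `σ i < σ j` with
no value in between, i.e. `σ j = σ i + 1`, and `σ s_i = s_{σ i} σ` is the conjugation formula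
for a transposition.
-/

open Equiv Equiv.Perm Finset

theorem strictMonoOn_of_lt_of_covBy {α β : Type*} [PartialOrder α] [SuccOrder α]
    [IsSuccArchimedean α] [Preorder β] {s : Set α} {f : α → β} (hs : s.OrdConnected)
    (hf : ∀ a b, a ⋖ b → a ∈ s → b ∈ s → f a < f b) : StrictMonoOn f s :=
  strictMonoOn_of_lt_succ hs fun a ha has hsa ↦
    hf a _ (Order.covBy_succ_of_not_isMax ha) has hsa

theorem Equiv.Perm.exists_covBy_apply_lt_of_ne_one {α : Type*} [LinearOrder α] [Finite α]
    [SuccOrder α] [IsSuccArchimedean α] {σ : Perm α} (hσ : σ ≠ 1) :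
    ∃ c k, c ⋖ k ∧ σ k < σ c := by
  by_contra! h
  have hmono : StrictMono σ := by
    simpa using strictMonoOn_of_lt_of_covBy Set.ordConnected_univ fun c k hck _ _ ↦
      (h c k hck).lt_of_ne (σ.injective.ne hck.ne)
  exact hσ (DFunLike.coe_injective hmono.eq_id)

theorem Fin.covBy_iff_val_eq_add_one {N : ℕ} {a b : Fin N} : a ⋖ b ↔ (b : ℕ) = a + 1 := by
  rw [Fin.covBy_iff, Nat.covBy_iff_add_one_eq, eq_comm]

namespace Equiv.Perm

variable {N : ℕ}

def inversions (σ : Perm (Fin N)) : Finset (Fin N × Fin N) :=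
  {p | p.1 < p.2 ∧ σ p.2 < σ p.1}

@[simp]
theorem mem_inversions {σ : Perm (Fin N)} {p : Fin N × Fin N} :
    p ∈ σ.inversions ↔ p.1 < p.2 ∧ σ p.2 < σ p.1 := by
  simp [inversions]

@[simp]
theorem inversions_one : (1 : Perm (Fin N)).inversions = ∅ := by
  ext p
  simpa using le_of_lt

theorem swap_apply_lt_swap_apply_iff {c k x y : Fin N} (hck : c ⋖ k) :
    swap c k x < swap c k y ↔ x = k ∧ y = c ∨ x < y ∧ ¬(x = c ∧ y = k) := by
  rw [Fin.covBy_iff_val_eq_add_one] at hck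
  rw [swap_apply_def, swap_apply_def]
  split_ifs <;> simp only [Fin.lt_def, Fin.ext_iff] at * <;> omega

theorem inversions_swap_mul {c k : Fin N} (hck : c ⋖ k) {σ : Perm (Fin N)}
    (h : σ⁻¹ c < σ⁻¹ k) :
    (swap c k * σ).inversions = insert (σ⁻¹ c, σ⁻¹ k) σ.inversions := by
  ext ⟨a, b⟩
  simp only [mem_inversions, mem_insert, Prod.mk.injEq, mul_apply,
    swap_apply_lt_swap_apply_iff hck, eq_inv_iff_eq]
  constructor
  · rintro ⟨hab, ⟨hbk, hac⟩ | ⟨hba, -⟩⟩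
    exacts [Or.inl ⟨hac, hbk⟩, Or.inr ⟨hab, hba⟩]
  · rintro (⟨hac, hbk⟩ | ⟨hab, hba⟩)
    · exact ⟨by simpa [← hac, ← hbk] using h, Or.inl ⟨hbk, hac⟩⟩
    · refine ⟨hab, Or.inr ⟨hba, ?_⟩⟩
      rintro ⟨hbc, hak⟩
      exact lt_asymm h (by simpa [← hbc, ← hak] using hab)

theorem card_inversions_swap_mul_of_lt {c k : Fin N} (hck : c ⋖ k) {σ : Perm (Fin N)}
    (h : σ⁻¹ c < σ⁻¹ k) : #(swap c k * σ).inversions = #σ.inversions + 1 := by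
  rw [inversions_swap_mul hck h, card_insert_of_notMem]
  simpa using fun _ ↦ hck.lt.le

theorem card_inversions_swap_mul_of_gt {c k : Fin N} (hck : c ⋖ k) {σ : Perm (Fin N)}
    (h : σ⁻¹ k < σ⁻¹ c) : #(swap c k * σ).inversions + 1 = #σ.inversions := by
  have key := card_inversions_swap_mul_of_lt hck (σ := swap c k * σ) (by simpa using h)
  rwa [← mul_assoc, swap_mul_self, one_mul, eq_comm] at key

theorem card_inversions_prod_le_length {l : List (Perm (Fin N))} (hl : ∀ τ ∈ l, IsAdjTrans τ) :
    #l.prod.inversions ≤ l.length := by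
  induction l with
  | nil => simp
  | cons τ l ih =>
    obtain ⟨c, k, hk, rfl⟩ := hl τ List.mem_cons_self
    have hck : c ⋖ k := Fin.covBy_iff_val_eq_add_one.2 hk
    have hl' := ih fun τ hτ ↦ hl τ (List.mem_cons_of_mem _ hτ)
    rw [List.prod_cons, List.length_cons]
    rcases lt_or_gt_of_ne (l.prod⁻¹.injective.ne hck.ne) with h | h
    · rw [card_inversions_swap_mul_of_lt hck h]
      omega
    · have := card_inversions_swap_mul_of_gt hck h
      omega

theorem exists_adjTrans_word (σ : Perm (Fin N)) :
    ∃ l : List (Perm (Fin N)), l.length = #σ.inversions ∧ (∀ τ ∈ l, IsAdjTrans τ) ∧ l.prod = σ := by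
  induction hn : #σ.inversions generalizing σ with
  | zero =>
    obtain rfl : σ = 1 := by
      by_contra hσ
      obtain ⟨c, k, hck, h⟩ := exists_covBy_apply_lt_of_ne_one (inv_ne_one.2 hσ)
      have := card_inversions_swap_mul_of_gt hck h
      omega
    exact ⟨[], rfl, by simp, rfl⟩
  | succ n ih =>
    have hσ : σ ≠ 1 := by
      rintro rfl
      simp at hn
    obtain ⟨c, k, hck, h⟩ := exists_covBy_apply_lt_of_ne_one (inv_ne_one.2 hσ)
    obtain ⟨l, hlen, hadj, hprod⟩ := ih (swap c k * σ) (by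
      have := card_inversions_swap_mul_of_gt hck h; omega)
    refine ⟨swap c k :: l, by simp [hlen], ?_, ?_⟩
    · simp only [List.mem_cons, forall_eq_or_imp]
      exact ⟨⟨c, k, Fin.covBy_iff_val_eq_add_one.1 hck, rfl⟩, hadj⟩
    · rw [List.prod_cons, hprod, ← mul_assoc, swap_mul_self, one_mul]

end Equiv.Perm

theorem permLength_eq_card_inversions {N : ℕ} (σ : Equiv.Perm (Fin N)) :
    permLength σ = #σ.inversions := by
  obtain ⟨l, hlen, hadj, hprod⟩ := exists_adjTrans_word σ
  refine le_antisymm (Nat.sInf_le ⟨l, hlen, hadj, hprod⟩) (le_csInf ⟨_, l, hlen, hadj, hprod⟩ ?_)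
  rintro _ ⟨l', rfl, hadj', rfl⟩
  exact card_inversions_prod_le_length hadj'

namespace IsMinDecomp

variable {N : ℕ} {v w : Fin N → ℕ} {σ : Equiv.Perm (Fin N)}

theorem inv_lt_inv_of_covBy (hσ : IsMinDecomp v w σ) {c k : Fin N} (hck : c ⋖ k)
    (hw : w c = w k) : σ⁻¹ c < σ⁻¹ k := by
  obtain ⟨-, hv, hmin⟩ := hσ
  by_contra! hle
  have hlt : σ⁻¹ k < σ⁻¹ c := hle.lt_of_ne (σ⁻¹.injective.ne hck.ne')
  have hv' : v = fun x ↦ w ((swap c k * σ) x) := by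
    simp only [hv, Perm.mul_apply, apply_swap_eq_self hw]
  have hshorter := card_inversions_swap_mul_of_gt hck hlt
  have hminimal := hmin _ hv'
  rw [permLength_eq_card_inversions, permLength_eq_card_inversions] at hminimal
  omega

theorem inv_strictMonoOn_Icc (hσ : IsMinDecomp v w σ) {x y : Fin N} (hw : w x = w y) :
    StrictMonoOn ⇑σ⁻¹ (Set.Icc x y) :=
  strictMonoOn_of_lt_of_covBy Set.ordConnected_Icc fun a b hab ha hb ↦
    hσ.inv_lt_inv_of_covBy hab <| le_antisymm
      (calc w a ≤ w x := hσ.1 _ _ ha.1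
        _ = w y := hw
        _ ≤ w b := hσ.1 _ _ hb.2)
      (hσ.1 _ _ hab.le)

end IsMinDecomp

/-- If `v[i] = v[i+1]` then `σ_v s_i = s_{σ_v[i]} σ_v`: the right action of the
adjacent transposition `s_i` on positions equals the left action of the
transposition of the values `σ_v[i]` and `σ_v[i] + 1`. -/
theorem sigma_mul_swap_eq_swap_values_mul {N : ℕ} (v w : Fin N → ℕ)
    (i j : Fin N) (hj : (j : ℕ) = (i : ℕ) + 1)
    (σ : Equiv.Perm (Fin N)) (hσ : IsMinDecomp v w σ) (heq : v i = v j) :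
    ∃ k : Fin N, (k : ℕ) = (σ i : ℕ) + 1 ∧
      σ * Equiv.swap i j = Equiv.swap (σ i) k * σ := by
  have hij : i ⋖ j := Fin.covBy_iff_val_eq_add_one.2 hj
  have hw : w (σ i) = w (σ j) := by simpa only [hσ.2.1] using heq
  have hlt : σ i < σ j := by
    refine (le_of_not_gt fun hji ↦ ?_).lt_of_ne (σ.injective.ne hij.ne)
    have := hσ.inv_strictMonoOn_Icc hw.symm ⟨le_rfl, hji.le⟩ ⟨hji.le, le_rfl⟩ hji
    exact hij.lt.not_gt (by simpa using this)
  have hmono := hσ.inv_strictMonoOn_Icc hw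
  have hcov : σ i ⋖ σ j := ⟨hlt, fun m him hmj ↦ hij.2
    (by simpa using hmono ⟨le_rfl, hlt.le⟩ ⟨him.le, hmj.le⟩ him)
    (by simpa using hmono ⟨him.le, hmj.le⟩ ⟨hlt.le, le_rfl⟩ hmj)⟩
  exact ⟨σ j, Fin.covBy_iff_val_eq_add_one.1 hcov, Equiv.mul_swap_eq_swap_mul σ i j⟩
end

section
/- For any v ∈ ℕ^N, σ_{vΨ} = σ_v θ, where vΨ = (v[2], ..., v[N], v[1]+1) and θ is the cyclic permutation sending i to i+1 for i < N and N to 1 (i.e., θ = [2, 3, ..., N, 1]). -/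
/-- The affine operation `vΨ = (v[2], ..., v[N], v[1] + 1)`. -/
def vPsi {n : ℕ} (v : Fin (n + 1) → ℕ) : Fin (n + 1) → ℕ :=
  fun k => if h : (k : ℕ) + 1 < n + 1 then v ⟨(k : ℕ) + 1, h⟩ else v 0 + 1

/-!
Sort the positions of `v` by decreasing value, breaking ties by position. The length of a
permutation is its number of inversions, so a decomposition `v = w ∘ σ` with `w` antitone
that puts two tied positions in the wrong order is not minimal: swapping the two adjacent
equal values of `w` they are sent to removes exactly one inversion. Hence `σ_v` is the unique
permutation sending each position to its rank in this order. Passing to `vΨ` rotates the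
positions by `θ` and raises the entry that moves from the front to the back by one; it then
beats every entry it used to tie with, so the order of the rotated positions is unchanged and
`σ_v θ` ranks the positions of `vΨ`.
-/

open Equiv Finset OrderDual

section Inversions

variable {N : ℕ}

def inversions (σ : Perm (Fin N)) : Finset (Fin N × Fin N) :=
  {p | p.1 < p.2 ∧ σ p.2 < σ p.1}

def invCount (σ : Perm (Fin N)) : ℕ := #(inversions σ)

@[simp]
lemma mem_inversions {σ : Perm (Fin N)} {p : Fin N × Fin N} :
    p ∈ inversions σ ↔ p.1 < p.2 ∧ σ p.2 < σ p.1 := by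
  simp [inversions]

lemma isAdjTrans_iff {σ : Perm (Fin N)} : IsAdjTrans σ ↔ ∃ i j, i ⋖ j ∧ σ = swap i j := by
  simp only [IsAdjTrans, Fin.covBy_iff, Nat.covBy_iff_add_one_eq, eq_comm (a := (_ : ℕ) + 1)]

lemma swap_apply_lt_swap_apply_iff {i j x y : Fin N} (h : i ⋖ j)
    (hij : ¬(x = i ∧ y = j)) (hji : ¬(x = j ∧ y = i)) :
    swap i j x < swap i j y ↔ x < y := by
  rw [Fin.covBy_iff, Nat.covBy_iff_add_one_eq] at h
  simp only [Fin.ext_iff] at hij hji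
  simp only [swap_apply_def]
  split_ifs <;> simp only [Fin.lt_def, Fin.ext_iff] at * <;> omega

lemma inversions_swap_mul {σ : Perm (Fin N)} {i j : Fin N} (h : i ⋖ j) (hσ : σ⁻¹ i < σ⁻¹ j) :
    inversions (swap i j * σ) = insert (σ⁻¹ i, σ⁻¹ j) (inversions σ) := by
  ext ⟨p, q⟩
  simp only [mem_inversions, mem_insert, Prod.mk.injEq, Perm.mul_apply, Perm.eq_inv_iff_eq]
  have hlt := h.lt
  by_cases hij : σ q = i ∧ σ p = j
  · obtain ⟨hq, hp⟩ := hij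
    simp only [← hp, ← hq, Perm.inv_def, symm_apply_apply] at hσ
    simp [hp, hq, hσ.not_gt, hlt.ne']
  by_cases hji : σ q = j ∧ σ p = i
  · obtain ⟨hq, hp⟩ := hji
    simp only [← hp, ← hq, Perm.inv_def, symm_apply_apply] at hσ
    simp [hp, hq, hσ, hlt]
  rw [swap_apply_lt_swap_apply_iff h hij hji]
  tauto

lemma invCount_one : invCount (1 : Perm (Fin N)) = 0 := by
  simpa [invCount, Finset.eq_empty_iff_forall_notMem] using fun _ _ => le_of_lt

lemma invCount_swap_mul {σ : Perm (Fin N)} {i j : Fin N} (h : i ⋖ j) (hσ : σ⁻¹ i < σ⁻¹ j) :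
    invCount (swap i j * σ) = invCount σ + 1 := by
  rw [invCount, inversions_swap_mul h hσ, card_insert_of_notMem]
  · rfl
  · simp [h.lt.le]

lemma invCount_swap_mul_le (σ : Perm (Fin N)) {i j : Fin N} (h : i ⋖ j) :
    invCount (swap i j * σ) ≤ invCount σ + 1 := by
  rcases lt_or_gt_of_ne (σ⁻¹.injective.ne h.lt.ne) with hσ | hσ
  · exact (invCount_swap_mul h hσ).le
  · have := invCount_swap_mul (σ := swap i j * σ) h (by simpa [mul_inv_rev])
    rw [← mul_assoc, swap_mul_self, one_mul] at this
    omega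

lemma invCount_prod_le (l : List (Perm (Fin N))) (hl : ∀ τ ∈ l, IsAdjTrans τ) :
    invCount l.prod ≤ l.length := by
  induction l with
  | nil => simp [invCount_one]
  | cons τ l ih =>
    obtain ⟨i, j, hij, rfl⟩ := isAdjTrans_iff.1 (hl τ List.mem_cons_self)
    have := invCount_swap_mul_le l.prod hij
    have := ih fun τ hτ => hl τ (List.mem_cons_of_mem _ hτ)
    simp only [List.prod_cons, List.length_cons]
    omega

lemma exists_adjTrans_prod_eq (σ : Perm (Fin N)) :
    ∃ l : List (Perm (Fin N)), l.length = invCount σ ∧ (∀ τ ∈ l, IsAdjTrans τ) ∧ l.prod = σ := by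
  induction hk : invCount σ using Nat.strong_induction_on generalizing σ with | _ k ih
  by_cases hmono : StrictMono ⇑σ⁻¹
  · obtain rfl : σ = 1 := inv_eq_one.1 (Equiv.ext fun _ => hmono.apply_eq)
    exact ⟨[], by simp [← hk, invCount_one], by simp, rfl⟩
  rw [strictMono_iff_forall_covBy] at hmono
  push Not at hmono
  obtain ⟨i, j, hij, hle⟩ := hmono
  have hdesc : σ⁻¹ j < σ⁻¹ i := hle.lt_of_ne (σ⁻¹.injective.ne hij.lt.ne')
  set τ := swap i j * σ
  have hσ : swap i j * τ = σ := by simp [τ, ← mul_assoc]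
  have hτ := invCount_swap_mul (σ := τ) hij (by simpa [τ, mul_inv_rev] using hdesc)
  rw [hσ] at hτ
  obtain ⟨l, hlen, hl, hprod⟩ := ih (invCount τ) (by omega) τ rfl
  refine ⟨swap i j :: l, by rw [List.length_cons, hlen]; omega, ?_, by simp [hprod, hσ]⟩
  exact List.forall_mem_cons.2 ⟨isAdjTrans_iff.2 ⟨i, j, hij, rfl⟩, hl⟩

theorem permLength_eq_invCount (σ : Perm (Fin N)) : permLength σ = invCount σ := by
  obtain ⟨l, hlen, hl, hprod⟩ := exists_adjTrans_prod_eq σ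
  refine le_antisymm (Nat.sInf_le ⟨l, hlen, hl, hprod⟩) ?_
  refine le_csInf ⟨_, l, hlen, hl, hprod⟩ ?_
  rintro _ ⟨l', rfl, hl', rfl⟩
  exact invCount_prod_le l' hl'

end Inversions

section SortKey

variable {N : ℕ}

def sortKey (v : Fin N → ℕ) (i : Fin N) : ℕᵒᵈ ×ₗ Fin N := toLex (toDual (v i), i)

lemma sortKey_lt_sortKey_iff {v : Fin N → ℕ} {i j : Fin N} :
    sortKey v i < sortKey v j ↔ v j < v i ∨ v i = v j ∧ i < j := by
  simp [sortKey, Prod.Lex.toLex_lt_toLex]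

lemma IsMinDecomp.strictMono_sortKey {v w : Fin N → ℕ} {σ : Perm (Fin N)}
    (h : IsMinDecomp v w σ) : StrictMono fun a => sortKey v (σ⁻¹ a) := by
  obtain ⟨hw, hv, hmin⟩ := h
  have hvw (a : Fin N) : v (σ⁻¹ a) = w a := by simp [hv]
  refine (strictMono_iff_forall_covBy _).2 fun a b hab => ?_
  rw [sortKey_lt_sortKey_iff, hvw, hvw]
  rcases (hw a b hab.le).lt_or_eq with hlt | heq
  · exact .inl hlt
  rcases lt_or_gt_of_ne (σ⁻¹.injective.ne hab.lt.ne) with hlt | hdesc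
  · exact .inr ⟨heq.symm, hlt⟩
  exfalso
  set τ := swap a b * σ
  have hτ : swap a b * τ = σ := by simp [τ, ← mul_assoc]
  have hcount := invCount_swap_mul (σ := τ) hab (by simpa [τ, mul_inv_rev] using hdesc)
  have hvτ : v = fun k => w (τ k) := by
    rw [hv]
    funext k
    exact (apply_swap_eq_self heq.symm _).symm
  have := hmin τ hvτ
  rw [permLength_eq_invCount, permLength_eq_invCount, ← hτ] at this
  omega

lemma eq_of_strictMono_sortKey {v : Fin N → ℕ} {σ τ : Perm (Fin N)}
    (hσ : StrictMono fun a => sortKey v (σ⁻¹ a)) (hτ : StrictMono fun a => sortKey v (τ⁻¹ a)) :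
    σ = τ := by
  have : StrictMono ⇑(τ * σ⁻¹) := fun a b hab => hτ.lt_iff_lt.1 (by simpa using hσ hab)
  exact (mul_inv_eq_one.1 (Equiv.ext fun _ => this.apply_eq)).symm

end SortKey

section Affine

variable {n : ℕ}

lemma vPsi_castSucc (v : Fin (n + 1) → ℕ) (k : Fin n) : vPsi v k.castSucc = v k.succ := by
  simp [vPsi, Fin.succ]

lemma vPsi_last (v : Fin (n + 1) → ℕ) : vPsi v (Fin.last n) = v 0 + 1 := by
  simp [vPsi]

lemma sortKey_vPsi_lt_of_lt (v : Fin (n + 1) → ℕ) {i j : Fin (n + 1)}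
    (h : sortKey v (finRotate _ i) < sortKey v (finRotate _ j)) :
    sortKey (vPsi v) i < sortKey (vPsi v) j := by
  rw [sortKey_lt_sortKey_iff] at h ⊢
  induction i using Fin.lastCases <;> induction j using Fin.lastCases <;>
    simp_all [vPsi_castSucc, vPsi_last, Fin.castSucc_lt_last] <;> omega

end Affine

/-- `σ_{vΨ} = σ_v θ` where `θ = [2, 3, ..., N, 1]` (the rotation `finRotate`),
composition being `(σθ)[i] = σ[θ[i]]`. -/
theorem sigma_of_affine {n : ℕ} (v w w' : Fin (n + 1) → ℕ)
    (σ σ' : Equiv.Perm (Fin (n + 1)))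
    (hσ : IsMinDecomp v w σ) (hσ' : IsMinDecomp (vPsi v) w' σ') :
    σ' = σ * finRotate (n + 1) := by
  refine eq_of_strictMono_sortKey hσ'.strictMono_sortKey fun a b hab => ?_
  apply sortKey_vPsi_lt_of_lt
  simpa [mul_inv_rev] using hσ.strictMono_sortKey hab
end

section
/- Define S(v) := Σ_{1 ≤ i < j ≤ N} ε(v[i] − v[j]) for v ∈ ℕ^N, where ε(x) = (|x| + |x+1| − 1)/2. If v[m] < v[m+1] and v' = v s_m (swap entries m and m+1), then S(v') = S(v) + 1. -/
/-- `ε(x) = (|x| + |x+1| − 1)/2`. -/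
def epsInt (x : ℤ) : ℤ := (|x| + |x + 1| - 1) / 2

/-- `S(v) = Σ_{1 ≤ i < j ≤ N} ε(v[i] − v[j])`. -/
def Sstat {N : ℕ} (v : Fin N → ℕ) : ℤ :=
  ∑ p ∈ Finset.univ.filter (fun p : Fin N × Fin N => p.1 < p.2),
    epsInt ((v p.1 : ℤ) - (v p.2 : ℤ))

lemma swap_lt_aux {N : ℕ} (m j a b : Fin N) (hj : (j : ℕ) = (m : ℕ) + 1)
    (hab : a < b) (hne : ¬(a = m ∧ b = j)) :
    Equiv.swap m j a < Equiv.swap m j b := by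
  have hvne : ∀ x y : Fin N, x ≠ y → (x : ℕ) ≠ (y : ℕ) := fun x y h hc => h (Fin.ext hc)
  rw [Fin.lt_def] at hab ⊢
  rcases eq_or_ne a m with rfl | ha1
  · rcases eq_or_ne b j with rfl | hb2
    · exact absurd ⟨rfl, rfl⟩ hne
    · have hbm : b ≠ a := fun h => by omega
      rw [Equiv.swap_apply_left, Equiv.swap_apply_of_ne_of_ne hbm hb2]
      have := hvne b j hb2; omega
  · rcases eq_or_ne a j with rfl | ha2
    · have hbm : b ≠ m := fun h => by subst h; omega
      have hbj : b ≠ a := fun h => by subst h; omega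
      rw [Equiv.swap_apply_right, Equiv.swap_apply_of_ne_of_ne hbm hbj]
      have := hvne a m (fun h => by subst h; omega); omega
    · rw [Equiv.swap_apply_of_ne_of_ne ha1 ha2]
      rcases eq_or_ne b m with rfl | hb1
      · rw [Equiv.swap_apply_left]; omega
      · rcases eq_or_ne b j with rfl | hb2
        · rw [Equiv.swap_apply_right]
          have := hvne a m ha1; have := hvne a b ha2; omega
        · rw [Equiv.swap_apply_of_ne_of_ne hb1 hb2]; exact hab

/-- If `v[m] < v[m+1]` and `v' = v s_m` (swapping entries `m` and `m+1`), then
`S(v') = S(v) + 1`. -/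
theorem Sstat_swap {N : ℕ} (v : Fin N → ℕ) (m j : Fin N)
    (hj : (j : ℕ) = (m : ℕ) + 1) (hlt : v m < v j) :
    Sstat (fun k => v (Equiv.swap m j k)) = Sstat v + 1 := by
  classical
  have hmj : m < j := Fin.lt_def.mpr (by omega)
  set s : Finset (Fin N × Fin N) :=
    Finset.univ.filter (fun p : Fin N × Fin N => p.1 < p.2) with hs
  have hmem : (m, j) ∈ s := by simp [hs, hmj]
  unfold Sstat
  rw [← Finset.add_sum_erase _ _ hmem, ← Finset.add_sum_erase _ _ hmem]
  have hterm : epsInt ((v (Equiv.swap m j (m, j).1) : ℤ) - (v (Equiv.swap m j (m, j).2) : ℤ))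
      = epsInt ((v (m, j).1 : ℤ) - (v (m, j).2 : ℤ)) + 1 := by
    simp only [Equiv.swap_apply_left, Equiv.swap_apply_right]
    have h1 : (v m : ℤ) < (v j : ℤ) := by exact_mod_cast hlt
    unfold epsInt
    rw [abs_of_nonneg (by omega : (0:ℤ) ≤ (v j : ℤ) - v m),
        abs_of_nonneg (by omega : (0:ℤ) ≤ (v j : ℤ) - v m + 1),
        abs_of_nonpos (by omega : ((v m : ℤ) - v j) ≤ 0),
        abs_of_nonpos (by omega : ((v m : ℤ) - v j + 1) ≤ 0)]
    omega
  rw [hterm]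
  have hsum : ∑ p ∈ s.erase (m, j),
      epsInt ((v (Equiv.swap m j p.1) : ℤ) - (v (Equiv.swap m j p.2) : ℤ))
      = ∑ p ∈ s.erase (m, j), epsInt ((v p.1 : ℤ) - (v p.2 : ℤ)) := by
    apply Finset.sum_nbij' (i := fun p => (Equiv.swap m j p.1, Equiv.swap m j p.2))
      (j := fun p => (Equiv.swap m j p.1, Equiv.swap m j p.2))
    · intro p hp
      simp only [Finset.mem_erase, hs, Finset.mem_filter, Finset.mem_univ, true_and] at hp ⊢
      obtain ⟨hne, hab⟩ := hp
      constructor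
      · intro hcon
        rw [Prod.ext_iff] at hcon
        obtain ⟨h1, h2⟩ := hcon
        have e1 : p.1 = j := by
          have := congrArg (Equiv.swap m j) h1
          simpa using this
        have e2 : p.2 = m := by
          have := congrArg (Equiv.swap m j) h2
          simpa using this
        rw [e1, e2] at hab
        exact absurd hab (not_lt.mpr hmj.le)
      · refine swap_lt_aux m j p.1 p.2 hj hab ?_
        rintro ⟨h1, h2⟩
        exact hne (Prod.ext h1 h2)
    · intro p hp
      simp only [Finset.mem_erase, hs, Finset.mem_filter, Finset.mem_univ, true_and] at hp ⊢
      obtain ⟨hne, hab⟩ := hp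
      constructor
      · intro hcon
        rw [Prod.ext_iff] at hcon
        obtain ⟨h1, h2⟩ := hcon
        have e1 : p.1 = j := by
          have := congrArg (Equiv.swap m j) h1
          simpa using this
        have e2 : p.2 = m := by
          have := congrArg (Equiv.swap m j) h2
          simpa using this
        rw [e1, e2] at hab
        exact absurd hab (not_lt.mpr hmj.le)
      · refine swap_lt_aux m j p.1 p.2 hj hab ?_
        rintro ⟨h1, h2⟩
        exact hne (Prod.ext h1 h2)
    · intro p _; simp
    · intro p _; simp
    · intro p _
      simp
  rw [hsum]
  ring
end

section
/- Define S(v) := Σ_{1 ≤ i < j ≤ N} ε(v[i] − v[j]) with ε(x) = (|x| + |x+1| − 1)/2. Then for the affine map vΨ = (v[2], ..., v[N], v[1]+1), one has S(vΨ) = S(v). -/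
lemma eps_flip (x : ℤ) : epsInt (-x - 1) = epsInt x := by
  unfold epsInt
  rw [show -x - 1 = -(x+1) by ring, abs_neg, show -(x+1) + 1 = -x by ring, abs_neg]
  ring_nf

/-- `S(vΨ) = S(v)`. -/
theorem Sstat_affine {n : ℕ} (v : Fin (n + 1) → ℕ) :
    Sstat (vPsi v) = Sstat v := by
  classical
  unfold Sstat
  refine Finset.sum_nbij'
    (fun p : Fin (n+1) × Fin (n+1) =>
      if (p.2 : ℕ) = n then
        ((0 : Fin (n+1)), ⟨((p.1 : ℕ) + 1) % (n+1), Nat.mod_lt _ n.succ_pos⟩)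
      else
        (⟨((p.1 : ℕ) + 1) % (n+1), Nat.mod_lt _ n.succ_pos⟩,
         ⟨((p.2 : ℕ) + 1) % (n+1), Nat.mod_lt _ n.succ_pos⟩))
    (fun q : Fin (n+1) × Fin (n+1) =>
      if (q.1 : ℕ) = 0 then
        (⟨(q.2 : ℕ) - 1, by omega⟩, ⟨n, by omega⟩)
      else
        (⟨(q.1 : ℕ) - 1, by omega⟩, ⟨(q.2 : ℕ) - 1, by omega⟩))
    ?_ ?_ ?_ ?_ ?_
  · rintro ⟨a, b⟩ h
    simp only [Finset.mem_filter, Finset.mem_univ, true_and, Fin.lt_def] at h ⊢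
    have ha := a.isLt; have hb := b.isLt
    split_ifs with hb'
    · simp only [Fin.val_zero]
      rw [Nat.mod_eq_of_lt (by omega)]
      omega
    · have e1 : ((a:ℕ)+1) % (n+1) = (a:ℕ)+1 := Nat.mod_eq_of_lt (by omega)
      have e2 : ((b:ℕ)+1) % (n+1) = (b:ℕ)+1 := Nat.mod_eq_of_lt (by omega)
      dsimp only
      omega
  · rintro ⟨a, b⟩ h
    simp only [Finset.mem_filter, Finset.mem_univ, true_and, Fin.lt_def] at h ⊢
    have ha := a.isLt; have hb := b.isLt
    split_ifs with ha' <;> dsimp only <;> omega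
  · rintro ⟨a, b⟩ h
    simp only [Finset.mem_filter, Finset.mem_univ, true_and, Fin.lt_def] at h
    have ha := a.isLt; have hb := b.isLt
    dsimp only
    by_cases hb' : (b : ℕ) = n
    · rw [if_pos hb']
      have e1 : ((a:ℕ)+1) % (n+1) = (a:ℕ)+1 := Nat.mod_eq_of_lt (by omega)
      dsimp only
      rw [if_pos (by simp : ((0:Fin (n+1)) : ℕ) = 0)]
      simp only [Prod.ext_iff, Fin.ext_iff]
      constructor <;> omega
    · rw [if_neg hb']
      have e1 : ((a:ℕ)+1) % (n+1) = (a:ℕ)+1 := Nat.mod_eq_of_lt (by omega)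
      have e2 : ((b:ℕ)+1) % (n+1) = (b:ℕ)+1 := Nat.mod_eq_of_lt (by omega)
      dsimp only
      rw [if_neg (by omega)]
      simp only [Prod.ext_iff, Fin.ext_iff]
      constructor <;> omega
  · rintro ⟨a, b⟩ h
    simp only [Finset.mem_filter, Finset.mem_univ, true_and, Fin.lt_def] at h
    have ha := a.isLt; have hb := b.isLt
    dsimp only
    by_cases ha' : (a : ℕ) = 0
    · rw [if_pos ha']
      have e1 : ((b:ℕ)-1+1) % (n+1) = (b:ℕ)-1+1 := Nat.mod_eq_of_lt (by omega)
      dsimp only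
      rw [if_pos rfl]
      simp only [Prod.ext_iff, Fin.ext_iff, Fin.val_zero]
      constructor <;> omega
    · rw [if_neg ha']
      have e1 : ((a:ℕ)-1+1) % (n+1) = (a:ℕ)-1+1 := Nat.mod_eq_of_lt (by omega)
      have e2 : ((b:ℕ)-1+1) % (n+1) = (b:ℕ)-1+1 := Nat.mod_eq_of_lt (by omega)
      dsimp only
      rw [if_neg (by omega)]
      simp only [Prod.ext_iff, Fin.ext_iff]
      constructor <;> omega
  · rintro ⟨a, b⟩ h
    simp only [Finset.mem_filter, Finset.mem_univ, true_and, Fin.lt_def] at h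
    have ha := a.isLt; have hb := b.isLt
    dsimp only
    by_cases hb' : (b : ℕ) = n
    · rw [if_pos hb']
      have h1 : (a : ℕ) + 1 < n + 1 := by omega
      have h2 : ¬ ((b : ℕ) + 1 < n + 1) := by omega
      unfold vPsi
      rw [dif_pos h1, dif_neg h2]
      dsimp only
      rw [show ((v ⟨(a:ℕ)+1, h1⟩ : ℤ) - ((v 0 + 1 : ℕ) : ℤ))
        = -(((v (0 : Fin (n+1)) : ℤ)) - (v ⟨(a:ℕ)+1, h1⟩ : ℤ)) - 1 by push_cast; ring]
      rw [eps_flip]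
      congr 2
      simp [Fin.ext_iff, Nat.mod_eq_of_lt (show (a:ℕ)+1 < n+1 from h1)]
    · rw [if_neg hb']
      have h1 : (a : ℕ) + 1 < n + 1 := by omega
      have h2 : (b : ℕ) + 1 < n + 1 := by omega
      unfold vPsi
      rw [dif_pos h1, dif_pos h2]
      congr 2 <;> simp [Fin.ext_iff, Nat.mod_eq_of_lt, h1, h2]
end

section
/- Every vertex (τ, ζ, v, σ) reachable from the root of the graph G_λ satisfies σ = σ_v and ζ[i] = v[i]·α + CT_τ[σ_v[i]] for all i, where CT_τ is the content vector of the reverse standard tableau τ. In particular, the spectral vector ζ is determined by the pair (v, τ). -/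
open Finset Polynomial

section Helpers
variable {N : ℕ}

def invSet (σ : Equiv.Perm (Fin N)) : Finset (Fin N × Fin N) :=
  Finset.univ.filter fun p => p.1 < p.2 ∧ σ p.2 < σ p.1

def nvSet (v : Fin N → ℕ) : Finset (Fin N × Fin N) :=
  Finset.univ.filter fun p => p.1 < p.2 ∧ v p.1 < v p.2

lemma swap_adj_lt {i j k l : Fin N} (hj : (j:ℕ) = (i:ℕ) + 1) (hkl : k < l)
    (hne : ¬(k = i ∧ l = j)) : Equiv.swap i j k < Equiv.swap i j l := by
  rw [Equiv.swap_apply_def, Equiv.swap_apply_def]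
  simp only [Fin.lt_def, Fin.ext_iff] at *
  split_ifs <;> omega

lemma mem_invSet {σ : Equiv.Perm (Fin N)} {p : Fin N × Fin N} :
    p ∈ invSet σ ↔ p.1 < p.2 ∧ σ p.2 < σ p.1 := by simp [invSet]

lemma invNum_mul_swap_of_gt (σ : Equiv.Perm (Fin N)) {i j : Fin N}
    (hj : (j:ℕ) = (i:ℕ) + 1) (hd : σ j < σ i) :
    (invSet (σ * Equiv.swap i j)).card + 1 = (invSet σ).card := by
  have hijlt : i < j := by rw [Fin.lt_def]; omega
  have hmem : (i, j) ∈ invSet σ := mem_invSet.2 ⟨hijlt, hd⟩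
  have hcard : (invSet (σ * Equiv.swap i j)).card = ((invSet σ).erase (i, j)).card := by
    apply Finset.card_bij (fun p _ => (Equiv.swap i j p.1, Equiv.swap i j p.2))
    · rintro ⟨k, l⟩ hp
      rw [mem_invSet] at hp
      obtain ⟨hkl, hiv⟩ := hp
      simp only [Equiv.Perm.mul_apply] at hiv
      have hne : ¬(k = i ∧ l = j) := by
        rintro ⟨rfl, rfl⟩
        rw [Equiv.swap_apply_left, Equiv.swap_apply_right] at hiv
        exact absurd hd (asymm hiv)
      refine Finset.mem_erase.2 ⟨?_, mem_invSet.2 ⟨swap_adj_lt hj hkl hne, hiv⟩⟩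
      intro h
      have h1 : Equiv.swap i j k = i := congrArg Prod.fst h
      have h2 : Equiv.swap i j l = j := congrArg Prod.snd h
      have hk : k = j := by
        apply (Equiv.swap i j).injective
        rw [h1, Equiv.swap_apply_right]
      have hl : l = i := by
        apply (Equiv.swap i j).injective
        rw [h2, Equiv.swap_apply_left]
      subst hk hl
      exact absurd hkl (asymm hijlt)
    · rintro ⟨k₁, l₁⟩ h₁ ⟨k₂, l₂⟩ h₂ heq
      have e1 : Equiv.swap i j k₁ = Equiv.swap i j k₂ := congrArg Prod.fst heq
      have e2 : Equiv.swap i j l₁ = Equiv.swap i j l₂ := congrArg Prod.snd heq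
      have := (Equiv.swap i j).injective e1
      have := (Equiv.swap i j).injective e2
      simp_all
    · rintro ⟨k, l⟩ hq
      obtain ⟨hne, hq⟩ := Finset.mem_erase.1 hq
      rw [mem_invSet] at hq
      obtain ⟨hkl, hinv⟩ := hq
      have hne' : ¬(k = i ∧ l = j) := by
        rintro ⟨rfl, rfl⟩; exact hne rfl
      refine ⟨(Equiv.swap i j k, Equiv.swap i j l), ?_, ?_⟩
      · rw [mem_invSet]
        refine ⟨swap_adj_lt hj hkl hne', ?_⟩
        simp only [Equiv.Perm.mul_apply, Equiv.swap_apply_self]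
        exact hinv
      · simp [Equiv.swap_apply_self]
  rw [hcard, Finset.card_erase_of_mem hmem]
  have : 0 < (invSet σ).card := Finset.card_pos.2 ⟨_, hmem⟩
  omega

lemma invNum_mul_swap_of_lt (σ : Equiv.Perm (Fin N)) {i j : Fin N}
    (hj : (j:ℕ) = (i:ℕ) + 1) (hd : σ i < σ j) :
    (invSet (σ * Equiv.swap i j)).card = (invSet σ).card + 1 := by
  have h := invNum_mul_swap_of_gt (σ * Equiv.swap i j) hj
    (by simp only [Equiv.Perm.mul_apply, Equiv.swap_apply_left, Equiv.swap_apply_right]; exact hd)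
  rw [mul_assoc, Equiv.swap_mul_self, mul_one] at h
  omega

lemma invSet_one : (invSet (1 : Equiv.Perm (Fin N))) = ∅ := by
  ext ⟨k, l⟩
  simp only [mem_invSet, Finset.notMem_empty, iff_false, not_and, Equiv.Perm.one_apply]
  intro h
  exact asymm h

lemma strictMono_eq_one {σ : Equiv.Perm (Fin N)} (hm : StrictMono σ) : σ = 1 := by
  have : (⟨σ, fun {a b} => hm.le_iff_le⟩ : Fin N ≃o Fin N) = OrderIso.refl _ :=
    Subsingleton.elim _ _
  ext k
  have h2 : σ k = k := by
    simpa using congrArg (fun e : Fin N ≃o Fin N => e k) this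
  simp [h2]

lemma exists_adj_descent {σ : Equiv.Perm (Fin N)} (h : σ ≠ 1) :
    ∃ i j : Fin N, (j:ℕ) = (i:ℕ) + 1 ∧ σ j < σ i := by
  by_contra hc
  push_neg at hc
  apply h
  apply strictMono_eq_one
  intro k l hkl
  obtain ⟨d, hd⟩ : ∃ d, (l:ℕ) = (k:ℕ) + (d+1) := ⟨(l:ℕ) - (k:ℕ) - 1, by
    have := (Fin.lt_def).1 hkl; omega⟩
  clear hkl
  induction d generalizing l with
  | zero =>
      have hle : σ k ≤ σ l := hc k l (by omega)
      exact lt_of_le_of_ne hle (fun h' => absurd (σ.injective h') (Fin.ne_of_val_ne (by omega)))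
  | succ d ih =>
      have hm : (k:ℕ) + (d+1) < N := by have := l.isLt; omega
      have h1 : σ k < σ ⟨(k:ℕ) + (d+1), hm⟩ := ih (l := ⟨(k:ℕ)+(d+1), hm⟩) rfl
      have h2 : σ (⟨(k:ℕ) + (d+1), hm⟩ : Fin N) ≤ σ l := hc _ l (by simp; omega)
      exact lt_of_le_of_ne (le_of_lt (lt_of_lt_of_le h1 h2)) (fun h' => absurd (σ.injective h')
        (Fin.ne_of_val_ne (by simp; omega)))

lemma exists_word : ∀ (c : ℕ) (σ : Equiv.Perm (Fin N)), (invSet σ).card = c →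
    ∃ l : List (Equiv.Perm (Fin N)), l.length = c ∧ (∀ τ ∈ l, IsAdjTrans τ) ∧ l.prod = σ := by
  intro c
  induction c with
  | zero =>
      intro σ h0
      refine ⟨[], rfl, by simp, ?_⟩
      symm
      apply strictMono_eq_one
      intro k l hkl
      rcases lt_trichotomy (σ k) (σ l) with h'|h'|h'
      · exact h'
      · exact absurd (σ.injective h') (ne_of_lt hkl)
      · exfalso
        have : (k, l) ∈ invSet σ := mem_invSet.2 ⟨hkl, h'⟩
        rw [Finset.card_eq_zero] at h0
        simp [h0] at this
  | succ c ih =>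
      intro σ h0
      have hne : σ ≠ 1 := by
        intro h; rw [h, invSet_one] at h0; simp at h0
      obtain ⟨i, j, hj, hd⟩ := exists_adj_descent hne
      have hc : (invSet (σ * Equiv.swap i j)).card = c := by
        have := invNum_mul_swap_of_gt σ hj hd
        omega
      obtain ⟨l, hlen, hadj, hprod⟩ := ih _ hc
      refine ⟨l ++ [Equiv.swap i j], by simp [hlen], ?_, ?_⟩
      · intro τ hτ
        rcases List.mem_append.1 hτ with h | h
        · exact hadj τ h
        · simp at h
          exact ⟨i, j, hj, h⟩
      · rw [List.prod_append, List.prod_singleton, hprod, mul_assoc,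
          Equiv.swap_mul_self, mul_one]

lemma permLength_le_invNum (σ : Equiv.Perm (Fin N)) :
    permLength σ ≤ (invSet σ).card := by
  obtain ⟨l, hlen, hadj, hprod⟩ := exists_word _ σ rfl
  exact Nat.sInf_le ⟨l, hlen, hadj, hprod⟩

lemma invNum_word_le (l : List (Equiv.Perm (Fin N))) (h : ∀ τ ∈ l, IsAdjTrans τ) :
    (invSet l.prod).card ≤ l.length := by
  induction l using List.reverseRecOn with
  | nil => simp [invSet_one]
  | append_singleton l s ih =>
      have hs : IsAdjTrans s := h s (by simp)
      obtain ⟨i, j, hj, rfl⟩ := hs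
      rw [List.prod_append, List.prod_singleton]
      have hij : l.prod i ≠ l.prod j := by
        apply l.prod.injective.ne
        rw [Fin.ne_iff_vne]; omega
      have hle : (invSet l.prod).card ≤ l.length := ih (fun τ hτ => h τ (by simp [hτ]))
      rcases hij.lt_or_gt with h' | h'
      · rw [invNum_mul_swap_of_lt _ hj h']
        simpa using hle
      · have := invNum_mul_swap_of_gt _ hj h'
        simp only [List.length_append, List.length_singleton]
        omega

lemma invNum_le_permLength (σ : Equiv.Perm (Fin N)) :
    (invSet σ).card ≤ permLength σ := by
  apply le_csInf
  · obtain ⟨l, hlen, hadj, hprod⟩ := exists_word _ σ rfl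
    exact ⟨_, l, hlen, hadj, hprod⟩
  · rintro b ⟨l, rfl, hadj, rfl⟩
    exact invNum_word_le l hadj

lemma invSet_eq_nvSet {w v : Fin N → ℕ} {σ : Equiv.Perm (Fin N)}
    (hw : ∀ i j : Fin N, i ≤ j → w j ≤ w i) (hv : ∀ k, v k = w (σ k))
    (hs : ∀ k l : Fin N, k < l → v k = v l → σ k < σ l) : invSet σ = nvSet v := by
  have hwlt : ∀ x y : Fin N, w x < w y → y < x := by
    intro x y h
    by_contra hc
    push_neg at hc
    exact (not_le.2 h) (hw x y hc)
  ext ⟨k, l⟩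
  simp only [mem_invSet, nvSet, Finset.mem_filter, Finset.mem_univ, true_and]
  constructor
  · rintro ⟨hkl, hσ⟩
    refine ⟨hkl, ?_⟩
    rcases lt_trichotomy (v k) (v l) with h'|h'|h'
    · exact h'
    · exact absurd (hs k l hkl h') (asymm hσ)
    · rw [hv, hv] at h'
      exact absurd (hwlt _ _ h') (asymm hσ)
  · rintro ⟨hkl, hv'⟩
    refine ⟨hkl, ?_⟩
    rw [hv, hv] at hv'
    exact hwlt _ _ hv'

lemma nvSet_subset_invSet {w v : Fin N → ℕ} {σ : Equiv.Perm (Fin N)}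
    (hw : ∀ i j : Fin N, i ≤ j → w j ≤ w i) (hv : ∀ k, v k = w (σ k)) :
    nvSet v ⊆ invSet σ := by
  rintro ⟨k, l⟩ hp
  simp only [nvSet, Finset.mem_filter, Finset.mem_univ, true_and] at hp
  obtain ⟨hkl, hv'⟩ := hp
  rw [mem_invSet]
  refine ⟨hkl, ?_⟩
  rw [hv, hv] at hv'
  by_contra hc
  push_neg at hc
  exact (not_le.2 hv') (hw _ _ hc)

end Helpers
/-- A reverse standard tableau of shape the diagram `D`, given by its position
function `pos : entries → boxes (row, col)`: a bijective filling of `D` with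
`1, ..., N`, strictly decreasing along each row and each column. -/
def IsRST (n : ℕ) (D : Finset (ℕ × ℕ)) (pos : Fin (n + 1) → ℕ × ℕ) : Prop :=
  Function.Injective pos ∧ (∀ i, pos i ∈ D) ∧ (∀ b ∈ D, ∃ i, pos i = b) ∧
  (∀ i j : Fin (n + 1), (pos i).1 = (pos j).1 → (pos i).2 < (pos j).2 → j < i) ∧
  (∀ i j : Fin (n + 1), (pos i).2 = (pos j).2 → (pos i).1 < (pos j).1 → j < i)

/-- The content `CT_τ[i] = col(i) − row(i)` of the entry `i` in the tableau. -/
def tabContent {n : ℕ} (pos : Fin (n + 1) → ℕ × ℕ) (i : Fin (n + 1)) : ℤ :=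
  ((pos i).2 : ℤ) - ((pos i).1 : ℤ)

/-- The filling `τ^{(a,b)}` obtained by exchanging the entries `a` and `b`. -/
def swapEntries {n : ℕ} (pos : Fin (n + 1) → ℕ × ℕ) (a b : Fin (n + 1)) :
    Fin (n + 1) → ℕ × ℕ :=
  fun k => pos (Equiv.swap a b k)

/-- A vertex of the Yang–Baxter graph: a 4-tuple `(τ, ζ, v, σ)` of a tableau,
a spectral vector with entries in `ℤ[α]`, a weight, and a permutation. -/
abbrev YBVertex (n : ℕ) :=
  (Fin (n + 1) → ℕ × ℕ) × (Fin (n + 1) → Polynomial ℤ) × (Fin (n + 1) → ℕ) ×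
    Equiv.Perm (Fin (n + 1))

/-- The affine operation `ζΨ^α = (ζ[2], ..., ζ[N], ζ[1] + α)` on spectral
vectors, with `α = X`. -/
noncomputable def zetaPsi {n : ℕ} (ζ : Fin (n + 1) → Polynomial ℤ) :
    Fin (n + 1) → Polynomial ℤ :=
  fun k => if h : (k : ℕ) + 1 < n + 1 then ζ ⟨(k : ℕ) + 1, h⟩
    else ζ 0 + Polynomial.X

/-- The edges of the Yang–Baxter graph `G_λ` (`λ` given by the diagram `D`):
steps `s_i` with `v[i] < v[i+1]`; correct jumps `s_i` with `v[i] = v[i+1]`,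
`σ[i]` south-east of `σ[i+1]` and the swapped filling again an RST; and the
affine edges `Ψ`.  (Falls are omitted.) -/
inductive GStep (n : ℕ) (D : Finset (ℕ × ℕ)) : YBVertex n → YBVertex n → Prop
  | step (τ : Fin (n + 1) → ℕ × ℕ) (ζ : Fin (n + 1) → Polynomial ℤ)
      (v : Fin (n + 1) → ℕ) (σ : Equiv.Perm (Fin (n + 1)))
      (i j : Fin (n + 1)) (hj : (j : ℕ) = (i : ℕ) + 1) (hlt : v i < v j) :
      GStep n D (τ, ζ, v, σ)
        (τ, fun k => ζ (Equiv.swap i j k), fun k => v (Equiv.swap i j k),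
          σ * Equiv.swap i j)
  | jump (τ : Fin (n + 1) → ℕ × ℕ) (ζ : Fin (n + 1) → Polynomial ℤ)
      (v : Fin (n + 1) → ℕ) (σ : Equiv.Perm (Fin (n + 1)))
      (i j : Fin (n + 1)) (hj : (j : ℕ) = (i : ℕ) + 1) (heq : v i = v j)
      (hse : tabContent τ (σ j) + 2 ≤ tabContent τ (σ i))
      (hrst : IsRST n D (swapEntries τ (σ i) (σ j))) :
      GStep n D (τ, ζ, v, σ)
        (swapEntries τ (σ i) (σ j), fun k => ζ (Equiv.swap i j k), v, σ)
  | affine (τ : Fin (n + 1) → ℕ × ℕ) (ζ : Fin (n + 1) → Polynomial ℤ)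
      (v : Fin (n + 1) → ℕ) (σ : Equiv.Perm (Fin (n + 1))) :
      GStep n D (τ, ζ, v, σ) (τ, zetaPsi ζ, vPsi v, σ * finRotate (n + 1))

/-- The root of the graph: `(τ₀, CT_{τ₀}, 0^N, id)`. -/
noncomputable def rootVertex {n : ℕ} (τ0 : Fin (n + 1) → ℕ × ℕ) : YBVertex n :=
  (τ0, fun i => Polynomial.C (tabContent τ0 i), fun _ => 0, 1)

section Invariant
open Polynomial
variable {n : ℕ}

def GoodVertex (x : YBVertex n) : Prop :=
  (∃ w : Fin (n+1) → ℕ, (∀ i j : Fin (n+1), i ≤ j → w j ≤ w i) ∧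
      (∀ k, x.2.2.1 k = w (x.2.2.2 k))) ∧
  (∀ k l : Fin (n+1), k < l → x.2.2.1 k = x.2.2.1 l → x.2.2.2 k < x.2.2.2 l) ∧
  (∀ i, x.2.1 i = Polynomial.C ((x.2.2.1 i : ℤ)) * Polynomial.X +
    Polynomial.C (tabContent x.1 (x.2.2.2 i)))

lemma good_root (τ0 : Fin (n+1) → ℕ × ℕ) : GoodVertex (rootVertex τ0) := by
  refine ⟨⟨fun _ => 0, fun _ _ _ => le_refl _, fun _ => rfl⟩, ?_, ?_⟩
  · intro k l hkl _
    simpa [rootVertex] using hkl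
  · intro i
    simp [rootVertex]

lemma finRotate_mk (k : Fin (n+1)) (h : (k:ℕ)+1 < n+1) :
    finRotate (n+1) k = ⟨(k:ℕ)+1, h⟩ := by
  rw [finRotate_succ_apply]
  have hne : k ≠ Fin.last n := by
    rw [Fin.ne_iff_vne, Fin.val_last]; omega
  apply Fin.ext
  rw [Fin.val_add_one, if_neg hne]

lemma myFinRotate_last (k : Fin (n+1)) (h : ¬ ((k:ℕ)+1 < n+1)) :
    finRotate (n+1) k = 0 := by
  have hk : k = Fin.last n := by
    rw [Fin.ext_iff, Fin.val_last]
    have := k.isLt; omega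
  rw [finRotate_succ_apply, hk, Fin.last_add_one]

lemma swap_perm_apply (σ : Equiv.Perm (Fin (n+1))) (i j k : Fin (n+1)) :
    Equiv.swap (σ i) (σ j) (σ k) = σ (Equiv.swap i j k) := by
  simp [Equiv.swap_apply_apply, Equiv.Perm.mul_apply]

lemma good_step {D : Finset (ℕ × ℕ)} {x y : YBVertex n} (h : GStep n D x y)
    (hx : GoodVertex x) : GoodVertex y := by
  cases h with
  | step τ ζ v σ i j hj hlt =>
      obtain ⟨⟨w, hw, hvw0⟩, hs0, hζ0⟩ := hx
      have hvw : ∀ k, v k = w (σ k) := hvw0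
      have hs : ∀ k l : Fin (n+1), k < l → v k = v l → σ k < σ l := hs0
      have hζ : ∀ i, ζ i = Polynomial.C ((v i : ℤ)) * Polynomial.X +
          Polynomial.C (tabContent τ (σ i)) := hζ0
      refine ⟨⟨w, hw, ?_⟩, ?_, ?_⟩
      · intro k
        show v (Equiv.swap i j k) = w ((σ * Equiv.swap i j) k)
        rw [Equiv.Perm.mul_apply]
        exact hvw _
      · intro k l hkl heq
        replace heq : v (Equiv.swap i j k) = v (Equiv.swap i j l) := heq
        have hne : ¬(k = i ∧ l = j) := by
          rintro ⟨rfl, rfl⟩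
          rw [Equiv.swap_apply_left, Equiv.swap_apply_right] at heq
          omega
        have hlt' := swap_adj_lt hj hkl hne
        show (σ * Equiv.swap i j) k < (σ * Equiv.swap i j) l
        simp only [Equiv.Perm.mul_apply]
        exact hs _ _ hlt' heq
      · intro k
        show ζ (Equiv.swap i j k) = Polynomial.C ((v (Equiv.swap i j k) : ℤ)) * Polynomial.X +
          Polynomial.C (tabContent τ ((σ * Equiv.swap i j) k))
        simp only [Equiv.Perm.mul_apply]
        exact hζ (Equiv.swap i j k)
  | jump τ ζ v σ i j hj heq hse hrst =>
      obtain ⟨⟨w, hw, hvw0⟩, hs0, hζ0⟩ := hx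
      have hvw : ∀ k, v k = w (σ k) := hvw0
      have hs : ∀ k l : Fin (n+1), k < l → v k = v l → σ k < σ l := hs0
      have hζ : ∀ i, ζ i = Polynomial.C ((v i : ℤ)) * Polynomial.X +
          Polynomial.C (tabContent τ (σ i)) := hζ0
      refine ⟨⟨w, hw, hvw⟩, hs, ?_⟩
      intro k
      show ζ (Equiv.swap i j k) = Polynomial.C ((v k : ℤ)) * Polynomial.X +
        Polynomial.C (tabContent (swapEntries τ (σ i) (σ j)) (σ k))
      have hvk : v (Equiv.swap i j k) = v k := by
        rcases eq_or_ne k i with rfl | hki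
        · rw [Equiv.swap_apply_left]; exact heq.symm
        · rcases eq_or_ne k j with rfl | hkj
          · rw [Equiv.swap_apply_right]; exact heq
          · rw [Equiv.swap_apply_of_ne_of_ne hki hkj]
      have hct : tabContent (swapEntries τ (σ i) (σ j)) (σ k)
          = tabContent τ (σ (Equiv.swap i j k)) := by
        unfold tabContent swapEntries
        rw [swap_perm_apply]
      rw [hζ (Equiv.swap i j k), hvk, hct]
  | affine τ ζ v σ =>
      obtain ⟨⟨w, hw, hvw0⟩, hs0, hζ0⟩ := hx
      have hvw : ∀ k, v k = w (σ k) := hvw0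
      have hs : ∀ k l : Fin (n+1), k < l → v k = v l → σ k < σ l := hs0
      have hζ : ∀ i, ζ i = Polynomial.C ((v i : ℤ)) * Polynomial.X +
          Polynomial.C (tabContent τ (σ i)) := hζ0
      have key : ∀ x : Fin (n+1), x < σ 0 → w (σ 0) < w x := by
        intro x hx
        by_contra hcon
        push_neg at hcon
        have hxw : w x = w (σ 0) := le_antisymm hcon (hw x (σ 0) (le_of_lt hx))
        have hk : σ (σ.symm x) = x := σ.apply_symm_apply x
        have hvk : v 0 = v (σ.symm x) := by
          rw [hvw (σ.symm x), hk, hxw, ← hvw 0]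
        have hk0 : σ.symm x ≠ 0 := by
          intro h0
          rw [h0] at hk
          rw [hk] at hx
          exact lt_irrefl _ hx
        have h1 : σ 0 < σ (σ.symm x) := hs 0 (σ.symm x) (Fin.pos_of_ne_zero hk0) hvk
        rw [hk] at h1
        exact absurd hx (asymm h1)
      refine ⟨⟨fun x => if x = σ 0 then w (σ 0) + 1 else w x, ?_, ?_⟩, ?_, ?_⟩
      · intro a b hab
        show (if b = σ 0 then w (σ 0) + 1 else w b) ≤ (if a = σ 0 then w (σ 0) + 1 else w a)
        by_cases hb : b = σ 0 <;> by_cases ha : a = σ 0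
        · rw [if_pos hb, if_pos ha]
        · rw [if_pos hb, if_neg ha]
          subst hb
          exact key a (lt_of_le_of_ne hab ha)
        · rw [if_neg hb, if_pos ha]
          subst ha
          have := hw _ _ hab
          omega
        · rw [if_neg hb, if_neg ha]
          exact hw _ _ hab
      · intro k
        show vPsi v k = _
        unfold vPsi
        by_cases h : (k:ℕ)+1 < n+1
        · rw [dif_pos h]
          have hσ : (σ * finRotate (n+1)) k = σ ⟨(k:ℕ)+1, h⟩ := by
            rw [Equiv.Perm.mul_apply, finRotate_mk k h]
          rw [hσ]
          have hne : σ ⟨(k:ℕ)+1, h⟩ ≠ σ 0 := by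
            apply σ.injective.ne
            rw [Fin.ne_iff_vne]
            simp
          show v ⟨(k:ℕ)+1, h⟩ = if σ ⟨(k:ℕ)+1, h⟩ = σ 0 then w (σ 0) + 1 else w (σ ⟨(k:ℕ)+1, h⟩)
          rw [if_neg hne]
          exact hvw _
        · rw [dif_neg h]
          have hσ : (σ * finRotate (n+1)) k = σ 0 := by
            rw [Equiv.Perm.mul_apply, myFinRotate_last k h]
          rw [hσ]
          show v 0 + 1 = if σ 0 = σ 0 then w (σ 0) + 1 else w (σ 0)
          rw [if_pos rfl, hvw 0]
      · intro k l hkl heq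
        replace heq : vPsi v k = vPsi v l := heq
        show (σ * finRotate (n+1)) k < (σ * finRotate (n+1)) l
        unfold vPsi at heq
        simp only [Equiv.Perm.mul_apply]
        have hk : (k:ℕ)+1 < n+1 := by
          have h1 := Fin.lt_def.1 hkl
          have := l.isLt
          omega
        by_cases hl : (l:ℕ)+1 < n+1
        · rw [dif_pos hk, dif_pos hl] at heq
          rw [finRotate_mk k hk, finRotate_mk l hl]
          exact hs _ _ (by rw [Fin.lt_def]; simpa using Fin.lt_def.1 hkl) heq
        · rw [dif_pos hk, dif_neg hl] at heq
          rw [finRotate_mk k hk, myFinRotate_last l hl]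
          by_contra hc
          push_neg at hc
          have h1 : w (σ ⟨(k:ℕ)+1, hk⟩) ≤ w (σ 0) := hw _ _ hc
          rw [← hvw, ← hvw 0] at h1
          omega
      · intro k
        show zetaPsi ζ k = Polynomial.C ((vPsi v k : ℤ)) * Polynomial.X +
          Polynomial.C (tabContent τ ((σ * finRotate (n+1)) k))
        unfold zetaPsi vPsi
        by_cases h : (k:ℕ)+1 < n+1
        · rw [dif_pos h, dif_pos h]
          have hσ : (σ * finRotate (n+1)) k = σ ⟨(k:ℕ)+1, h⟩ := by
            rw [Equiv.Perm.mul_apply, finRotate_mk k h]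
          rw [hσ]
          exact hζ _
        · rw [dif_neg h, dif_neg h]
          have hσ : (σ * finRotate (n+1)) k = σ 0 := by
            rw [Equiv.Perm.mul_apply, myFinRotate_last k h]
          rw [hσ, hζ 0]
          push_cast [map_add, map_one]
          ring

lemma good_of_reachable {D : Finset (ℕ × ℕ)} {τ0 : Fin (n+1) → ℕ × ℕ}
    {x : YBVertex n} (h : Relation.ReflTransGen (GStep n D) (rootVertex τ0) x) :
    GoodVertex x := by
  induction h with
  | refl => exact good_root τ0
  | tail h1 h2 ih => exact good_step h2 ih

end Invariant
/-- Every vertex `(τ, ζ, v, σ)` reachable from the root of `G_λ` satisfies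
`σ = σ_v` (the minimal-length permutation sorting `v`) and
`ζ[i] = v[i]·α + CT_τ[σ_v[i]]`; in particular `ζ` is determined by `(v, τ)`. -/
theorem spectral_vector_of_reachable {n : ℕ} (D : Finset (ℕ × ℕ))
    (τ0 : Fin (n + 1) → ℕ × ℕ) (h0 : IsRST n D τ0)
    (τ : Fin (n + 1) → ℕ × ℕ) (ζ : Fin (n + 1) → Polynomial ℤ)
    (v : Fin (n + 1) → ℕ) (σ : Equiv.Perm (Fin (n + 1)))
    (hreach : Relation.ReflTransGen (GStep n D) (rootVertex τ0) (τ, ζ, v, σ)) :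
    (∃ w : Fin (n + 1) → ℕ, IsMinDecomp v w σ) ∧
    ∀ i, ζ i = Polynomial.C (v i : ℤ) * Polynomial.X +
      Polynomial.C (tabContent τ (σ i)) := by
  have hgood : GoodVertex (τ, ζ, v, σ) := good_of_reachable hreach
  obtain ⟨⟨w, hw, hvw0⟩, hs0, hζ0⟩ := hgood
  have hvw : ∀ k, v k = w (σ k) := hvw0
  have hs : ∀ k l : Fin (n+1), k < l → v k = v l → σ k < σ l := hs0
  have hζ : ∀ i, ζ i = Polynomial.C ((v i : ℤ)) * Polynomial.X +
      Polynomial.C (tabContent τ (σ i)) := hζ0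
  refine ⟨⟨w, hw, funext hvw, ?_⟩, hζ⟩
  intro σ' hveq
  calc permLength σ ≤ (invSet σ).card := permLength_le_invNum σ
    _ = (nvSet v).card := by rw [invSet_eq_nvSet hw hvw hs]
    _ ≤ (invSet σ').card :=
      Finset.card_le_card (nvSet_subset_invSet hw (fun k => congrFun hveq k))
    _ ≤ permLength σ' := invNum_le_permLength σ'
end

section
/- The Cherednik–Dunkl operators satisfy the Hecke-type relations: (s_i ⊗ s_i) ξ̃_i = ξ̃_{i+1} (s_i ⊗ s_i) + 1, (s_i ⊗ s_i) ξ̃_{i+1} = ξ̃_i (s_i ⊗ s_i) − 1, and (s_i ⊗ s_i) ξ̃_j = ξ̃_j (s_i ⊗ s_i) for j ≠ i, i+1, where ξ̃_i = α𝒰_i − α. -/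
/-!
Conjugation by `τ ⊗ τ`, for any permutation `τ`, carries `x_k 𝒟_k` to `x_{τ k} 𝒟_{τ k}`:
`∂/∂x_k` and the divided differences are equivariant, and `V_λ` is a representation, so
`op ⊗ ρ(σ)` composes as `(op ∘ op') ⊗ ρ(σσ')`. Hence the only non-equivariant part of `𝒰_k`
is the sum over `j < k`. For the adjacent transposition `s = s_{i,i+1}` its index set is
`s`-stable unless `k ∈ {i, i+1}`, where it gains or loses the single term `s ⊗ s`; composed
with the outer `s ⊗ s` that term is the identity, and after scaling by `α` it gives the `± 1`.
-/

open MvPolynomial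
open scoped Classical

variable {K : Type*} [Field K] {n : ℕ} {B : Type*}

/-- The divided difference `∂_{ij} p = (p − s_{ij} p)/(x_i − x_j)`, defined as
the (unique, since we are in an integral domain) quotient of `p − s_{ij} p`
by `x_i − x_j`. -/
noncomputable def divDiff (i j : Fin (n + 1)) (p : MvPolynomial (Fin (n + 1)) K) :
    MvPolynomial (Fin (n + 1)) K :=
  if h : ∃ c, p - rename (Equiv.swap i j) p = (X i - X j) * c then h.choose else 0

/-- The operator `op ⊗ ρ(σ)` on `V_λ`-valued polynomials (written as finitely
supported families of polynomials indexed by the basis `B` of the module),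
acting by `op` on the polynomial part and by `ρ(σ)` on the module part. -/
noncomputable def mixOp (ρ : Representation K (Equiv.Perm (Fin (n + 1))) (B →₀ K))
    (op : MvPolynomial (Fin (n + 1)) K → MvPolynomial (Fin (n + 1)) K)
    (σ : Equiv.Perm (Fin (n + 1)))
    (f : B →₀ MvPolynomial (Fin (n + 1)) K) : B →₀ MvPolynomial (Fin (n + 1)) K :=
  f.sum fun b p => ((ρ σ) (Finsupp.single b 1)).sum fun b' c =>
    Finsupp.single b' (MvPolynomial.C c * op p)

/-- The right action of a permutation `σ` simultaneously on the variables and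
on the module: `σ ⊗ σ`. -/
noncomputable def permTensor (ρ : Representation K (Equiv.Perm (Fin (n + 1))) (B →₀ K))
    (σ : Equiv.Perm (Fin (n + 1)))
    (f : B →₀ MvPolynomial (Fin (n + 1)) K) : B →₀ MvPolynomial (Fin (n + 1)) K :=
  mixOp ρ (rename ⇑σ⁻¹) σ⁻¹ f

/-- Multiplication by the variable `x_i`. -/
noncomputable def mulXOp (i : Fin (n + 1))
    (f : B →₀ MvPolynomial (Fin (n + 1)) K) : B →₀ MvPolynomial (Fin (n + 1)) K :=
  f.sum fun b p => Finsupp.single b (X i * p)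

/-- The Dunkl operator
`𝒟_i = ∂/∂x_i ⊗ 1 + (1/α) Σ_{j ≠ i} ∂_{ij} ⊗ s_{ij}`. -/
noncomputable def dunklOp (ρ : Representation K (Equiv.Perm (Fin (n + 1))) (B →₀ K))
    (α : K) (i : Fin (n + 1))
    (f : B →₀ MvPolynomial (Fin (n + 1)) K) : B →₀ MvPolynomial (Fin (n + 1)) K :=
  (f.sum fun b p => Finsupp.single b (pderiv i p)) +
    α⁻¹ • ∑ j ∈ Finset.univ.filter (fun j : Fin (n + 1) => j ≠ i),
      mixOp ρ (divDiff i j) (Equiv.swap i j) f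

/-- The Cherednik–Dunkl operator
`𝒰_i = x_i 𝒟_i − (1/α) Σ_{j<i} s_{ij} ⊗ s_{ij}`. -/
noncomputable def cherednikOp (ρ : Representation K (Equiv.Perm (Fin (n + 1))) (B →₀ K))
    (α : K) (i : Fin (n + 1))
    (f : B →₀ MvPolynomial (Fin (n + 1)) K) : B →₀ MvPolynomial (Fin (n + 1)) K :=
  mulXOp i (dunklOp ρ α i f) -
    α⁻¹ • ∑ j ∈ Finset.univ.filter (fun j : Fin (n + 1) => j < i),
      permTensor ρ (Equiv.swap i j) f

/-- The deformed Cherednik–Dunkl operator `ξ̃_i = α 𝒰_i − α`. -/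
noncomputable def xiOp (ρ : Representation K (Equiv.Perm (Fin (n + 1))) (B →₀ K))
    (α : K) (i : Fin (n + 1))
    (f : B →₀ MvPolynomial (Fin (n + 1)) K) : B →₀ MvPolynomial (Fin (n + 1)) K :=
  α • cherednikOp ρ α i f - α • f


section DividedDifference

lemma X_sub_X_dvd_X_sub_X_swap (i j k : Fin (n + 1)) :
    (X i - X j : MvPolynomial (Fin (n + 1)) K) ∣ X k - X (Equiv.swap i j k) := by
  rcases eq_or_ne k i with rfl | hki
  · rw [Equiv.swap_apply_left]
  rcases eq_or_ne k j with rfl | hkj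
  · rw [Equiv.swap_apply_right, dvd_sub_comm]
  · rw [Equiv.swap_apply_of_ne_of_ne hki hkj, sub_self]
    exact dvd_zero _

lemma X_sub_X_dvd_sub_rename_swap (i j : Fin (n + 1)) (p : MvPolynomial (Fin (n + 1)) K) :
    X i - X j ∣ p - rename (Equiv.swap i j) p := by
  induction p using MvPolynomial.induction_on with
  | C a => simp
  | add p q hp hq =>
    rw [map_add, add_sub_add_comm]
    exact dvd_add hp hq
  | mul_X p k hp =>
    rw [map_mul, rename_X, show p * X k - rename (Equiv.swap i j) p * X (Equiv.swap i j k) =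
      (p - rename (Equiv.swap i j) p) * X k +
        rename (Equiv.swap i j) p * (X k - X (Equiv.swap i j k)) by ring]
    exact dvd_add (hp.mul_right _) ((X_sub_X_dvd_X_sub_X_swap i j k).mul_left _)

lemma X_sub_X_mul_divDiff (i j : Fin (n + 1)) (p : MvPolynomial (Fin (n + 1)) K) :
    (X i - X j) * divDiff i j p = p - rename (Equiv.swap i j) p := by
  have h : ∃ c, p - rename (Equiv.swap i j) p = (X i - X j) * c :=
    X_sub_X_dvd_sub_rename_swap i j p
  rw [divDiff, dif_pos h]
  exact h.choose_spec.symm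

lemma divDiff_eq_of_X_sub_X_mul {i j : Fin (n + 1)} (hij : i ≠ j)
    {p c : MvPolynomial (Fin (n + 1)) K}
    (hc : p - rename (Equiv.swap i j) p = (X i - X j) * c) : divDiff i j p = c :=
  mul_left_cancel₀ (sub_ne_zero.mpr (X_injective.ne hij)) (by rw [X_sub_X_mul_divDiff, hc])

noncomputable def divDiffLinear {i j : Fin (n + 1)} (hij : i ≠ j) :
    MvPolynomial (Fin (n + 1)) K →ₗ[K] MvPolynomial (Fin (n + 1)) K where
  toFun := divDiff i j
  map_add' p q := divDiff_eq_of_X_sub_X_mul hij <| by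
    rw [map_add, mul_add, X_sub_X_mul_divDiff, X_sub_X_mul_divDiff]
    ring
  map_smul' c p := divDiff_eq_of_X_sub_X_mul hij <| by
    rw [RingHom.id_apply, map_smul, mul_smul_comm, X_sub_X_mul_divDiff, smul_sub]

lemma divDiff_rename (g : Equiv.Perm (Fin (n + 1))) {k m : Fin (n + 1)} (hkm : k ≠ m)
    (p : MvPolynomial (Fin (n + 1)) K) :
    divDiff (g k) (g m) (rename g p) = rename g (divDiff k m p) := by
  refine divDiff_eq_of_X_sub_X_mul (g.injective.ne hkm) ?_
  rw [← rename_X (R := K) g k, ← rename_X (R := K) g m, ← map_sub, ← map_mul,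
    X_sub_X_mul_divDiff, map_sub, rename_rename, rename_rename, ← Equiv.Perm.coe_mul,
    ← Equiv.Perm.coe_mul, Equiv.mul_swap_eq_swap_mul]

end DividedDifference

section TensorOperators

variable (ρ : Representation K (Equiv.Perm (Fin (n + 1))) (B →₀ K))

lemma mixOp_eq_conj_map (op : MvPolynomial (Fin (n + 1)) K →ₗ[K] MvPolynomial (Fin (n + 1)) K)
    (σ : Equiv.Perm (Fin (n + 1))) :
    mixOp ρ op σ =
      (TensorProduct.finsuppScalarLeft K (MvPolynomial (Fin (n + 1)) K) B).conj
        (TensorProduct.map (ρ σ) op) := by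
  funext f
  conv_rhs => rw [← f.sum_single, map_finsuppSum]
  refine Finsupp.sum_congr fun b _ => ?_
  simp [LinearEquiv.conj_apply, TensorProduct.finsuppScalarLeft_apply_tmul, smul_eq_C_mul]

lemma mixOp_mixOp (op₁ op₂ : MvPolynomial (Fin (n + 1)) K →ₗ[K] MvPolynomial (Fin (n + 1)) K)
    (σ₁ σ₂ : Equiv.Perm (Fin (n + 1))) (f : B →₀ MvPolynomial (Fin (n + 1)) K) :
    mixOp ρ op₁ σ₁ (mixOp ρ op₂ σ₂ f) = mixOp ρ (op₁ ∘ₗ op₂) (σ₁ * σ₂) f := by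
  rw [mixOp_eq_conj_map, mixOp_eq_conj_map, mixOp_eq_conj_map, map_mul, Module.End.mul_eq_comp,
    TensorProduct.map_comp, LinearEquiv.conj_comp, LinearMap.comp_apply]

lemma sum_single_eq_mixOp_one (op : MvPolynomial (Fin (n + 1)) K → MvPolynomial (Fin (n + 1)) K)
    (f : B →₀ MvPolynomial (Fin (n + 1)) K) :
    (f.sum fun b p => Finsupp.single b (op p)) = mixOp ρ op 1 f := by
  refine Finsupp.sum_congr fun b _ => ?_
  rw [map_one, Module.End.one_apply, Finsupp.sum_single_index (by simp), C_1, one_mul]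

lemma permTensor_eq_conj_map (σ : Equiv.Perm (Fin (n + 1))) :
    permTensor ρ σ =
      (TensorProduct.finsuppScalarLeft K (MvPolynomial (Fin (n + 1)) K) B).conj
        (TensorProduct.map (ρ σ⁻¹) (rename ⇑σ⁻¹).toLinearMap) :=
  mixOp_eq_conj_map ρ (rename ⇑σ⁻¹).toLinearMap σ⁻¹

lemma permTensor_add (σ : Equiv.Perm (Fin (n + 1))) (f g : B →₀ MvPolynomial (Fin (n + 1)) K) :
    permTensor ρ σ (f + g) = permTensor ρ σ f + permTensor ρ σ g := by
  rw [permTensor_eq_conj_map, map_add]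

lemma permTensor_sub (σ : Equiv.Perm (Fin (n + 1))) (f g : B →₀ MvPolynomial (Fin (n + 1)) K) :
    permTensor ρ σ (f - g) = permTensor ρ σ f - permTensor ρ σ g := by
  rw [permTensor_eq_conj_map, map_sub]

lemma permTensor_smul (σ : Equiv.Perm (Fin (n + 1))) (c : K)
    (f : B →₀ MvPolynomial (Fin (n + 1)) K) :
    permTensor ρ σ (c • f) = c • permTensor ρ σ f := by
  rw [permTensor_eq_conj_map, map_smul]

lemma permTensor_sum (σ : Equiv.Perm (Fin (n + 1))) {ι : Type*} (s : Finset ι)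
    (f : ι → B →₀ MvPolynomial (Fin (n + 1)) K) :
    permTensor ρ σ (∑ t ∈ s, f t) = ∑ t ∈ s, permTensor ρ σ (f t) := by
  rw [permTensor_eq_conj_map, map_sum]

lemma permTensor_permTensor (σ τ : Equiv.Perm (Fin (n + 1)))
    (f : B →₀ MvPolynomial (Fin (n + 1)) K) :
    permTensor ρ σ (permTensor ρ τ f) = permTensor ρ (τ * σ) f := by
  refine (mixOp_mixOp ρ (rename ⇑σ⁻¹).toLinearMap (rename ⇑τ⁻¹).toLinearMap σ⁻¹ τ⁻¹ f).trans ?_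
  unfold permTensor
  rw [mul_inv_rev, ← AlgHom.comp_toLinearMap, rename_comp_rename, Equiv.Perm.coe_mul]
  rfl

lemma permTensor_one (f : B →₀ MvPolynomial (Fin (n + 1)) K) : permTensor ρ 1 f = f := by
  simp [permTensor_eq_conj_map, Module.End.one_eq_id, TensorProduct.map_id]

lemma permTensor_swap_permTensor_swap (i j : Fin (n + 1))
    (f : B →₀ MvPolynomial (Fin (n + 1)) K) :
    permTensor ρ (Equiv.swap i j) (permTensor ρ (Equiv.swap i j) f) = f := by
  rw [permTensor_permTensor, Equiv.swap_mul_self, permTensor_one]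

lemma mixOp_permTensor {op op' : MvPolynomial (Fin (n + 1)) K →ₗ[K] MvPolynomial (Fin (n + 1)) K}
    {σ σ' : Equiv.Perm (Fin (n + 1))} (τ : Equiv.Perm (Fin (n + 1)))
    (hop : ∀ p, op (rename ⇑τ⁻¹ p) = rename ⇑τ⁻¹ (op' p)) (hσ : σ * τ⁻¹ = τ⁻¹ * σ')
    (f : B →₀ MvPolynomial (Fin (n + 1)) K) :
    mixOp ρ op σ (permTensor ρ τ f) = permTensor ρ τ (mixOp ρ op' σ' f) := by
  have hcomp : op ∘ₗ (rename ⇑τ⁻¹).toLinearMap = (rename ⇑τ⁻¹).toLinearMap ∘ₗ op' :=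
    LinearMap.ext hop
  refine (mixOp_mixOp ρ op (rename ⇑τ⁻¹).toLinearMap σ τ⁻¹ f).trans ?_
  rw [hcomp, hσ, ← mixOp_mixOp]
  rfl

end TensorOperators

section Equivariance

variable (ρ : Representation K (Equiv.Perm (Fin (n + 1))) (B →₀ K)) (α : K)

lemma mulXOp_permTensor (τ : Equiv.Perm (Fin (n + 1))) (k : Fin (n + 1))
    (f : B →₀ MvPolynomial (Fin (n + 1)) K) :
    mulXOp k (permTensor ρ τ f) = permTensor ρ τ (mulXOp (τ k) f) := by
  rw [mulXOp, mulXOp, sum_single_eq_mixOp_one ρ, sum_single_eq_mixOp_one ρ]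
  refine mixOp_permTensor ρ (op := LinearMap.mulLeft K (X k))
    (op' := LinearMap.mulLeft K (X (τ k))) τ (fun p => ?_) (by group) f
  simp

lemma dunklOp_permTensor (τ : Equiv.Perm (Fin (n + 1))) (k : Fin (n + 1))
    (f : B →₀ MvPolynomial (Fin (n + 1)) K) :
    dunklOp ρ α k (permTensor ρ τ f) = permTensor ρ τ (dunklOp ρ α (τ k) f) := by
  rw [dunklOp, dunklOp, sum_single_eq_mixOp_one ρ, sum_single_eq_mixOp_one ρ, permTensor_add,
    permTensor_smul, permTensor_sum]
  refine congrArg₂ (· + ·) ?_ (congrArg (α⁻¹ • ·) ?_)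
  · refine mixOp_permTensor ρ (op := (pderiv k).toLinearMap) (op' := (pderiv (τ k)).toLinearMap)
      τ (fun p => ?_) (by group) f
    simpa using pderiv_rename τ⁻¹.injective (τ k) p
  · refine Finset.sum_equiv τ (fun m => by simp) fun m hm => ?_
    have hmk : m ≠ k := (Finset.mem_filter.mp hm).2
    exact mixOp_permTensor ρ (op := divDiffLinear hmk.symm)
      (op' := divDiffLinear (τ.injective.ne hmk.symm)) τ
      (fun p => by simpa [divDiffLinear] using divDiff_rename τ⁻¹ (τ.injective.ne hmk.symm) p)
      (by rw [Equiv.swap_apply_apply]; group) f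

lemma cherednikOp_permTensor (τ : Equiv.Perm (Fin (n + 1))) (k : Fin (n + 1))
    {t : Finset (Fin (n + 1))} (ht : ∀ m, m < k ↔ τ m ∈ t)
    (f : B →₀ MvPolynomial (Fin (n + 1)) K) :
    cherednikOp ρ α k (permTensor ρ τ f) =
      permTensor ρ τ (mulXOp (τ k) (dunklOp ρ α (τ k) f) -
        α⁻¹ • ∑ m ∈ t, permTensor ρ (Equiv.swap (τ k) m) f) := by
  have hsum :
      ∑ m ∈ Finset.univ.filter (· < k), permTensor ρ (Equiv.swap k m) (permTensor ρ τ f) =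
        ∑ m ∈ t, permTensor ρ τ (permTensor ρ (Equiv.swap (τ k) m) f) := by
    refine Finset.sum_equiv τ (fun m => by simpa using ht m) fun m _ => ?_
    rw [permTensor_permTensor, permTensor_permTensor, Equiv.mul_swap_eq_swap_mul]
  rw [cherednikOp, hsum, dunklOp_permTensor, mulXOp_permTensor, permTensor_sub, permTensor_smul,
    permTensor_sum]

end Equivariance

section AdjacentTransposition

variable {i j : Fin (n + 1)}

lemma swap_lt_iff_of_val_eq_succ (hj : (j : ℕ) = i + 1) {c : Fin (n + 1)} (hc : c ≠ j)
    (m : Fin (n + 1)) : Equiv.swap i j m < c ↔ m < c := by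
  have hc' : (c : ℕ) ≠ j := Fin.val_ne_of_ne hc
  rcases eq_or_ne m i with rfl | hmi
  · rw [Equiv.swap_apply_left, Fin.lt_def, Fin.lt_def]
    omega
  rcases eq_or_ne m j with rfl | hmj
  · rw [Equiv.swap_apply_right, Fin.lt_def, Fin.lt_def]
    omega
  · rw [Equiv.swap_apply_of_ne_of_ne hmi hmj]

lemma filter_lt_eq_insert_of_val_eq_succ (hj : (j : ℕ) = i + 1) :
    Finset.univ.filter (· < j) = insert i (Finset.univ.filter (· < i)) := by
  ext m
  simp only [Finset.mem_filter, Finset.mem_univ, true_and, Finset.mem_insert, Fin.lt_def,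
    Fin.ext_iff, hj]
  omega

variable (ρ : Representation K (Equiv.Perm (Fin (n + 1))) (B →₀ K)) (α : K)

lemma cherednikOp_permTensor_swap_left (hj : (j : ℕ) = i + 1)
    (f : B →₀ MvPolynomial (Fin (n + 1)) K) :
    cherednikOp ρ α i (permTensor ρ (Equiv.swap i j) f) =
      permTensor ρ (Equiv.swap i j) (cherednikOp ρ α j f) + α⁻¹ • f := by
  have hij : i ≠ j := Fin.ne_of_val_ne (by omega)
  have hsplit : cherednikOp ρ α j f =
      (mulXOp j (dunklOp ρ α j f) -
        α⁻¹ • ∑ m ∈ Finset.univ.filter (· < i), permTensor ρ (Equiv.swap j m) f) -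
      α⁻¹ • permTensor ρ (Equiv.swap i j) f := by
    rw [cherednikOp, filter_lt_eq_insert_of_val_eq_succ hj, Finset.sum_insert (by simp),
      Equiv.swap_comm j i, smul_add]
    abel
  rw [cherednikOp_permTensor ρ α (Equiv.swap i j) i (t := Finset.univ.filter (· < i))
      (fun m => by simpa using (swap_lt_iff_of_val_eq_succ hj hij m).symm),
    Equiv.swap_apply_left, hsplit, permTensor_sub ρ _ _ (α⁻¹ • permTensor ρ (Equiv.swap i j) f),
    permTensor_smul, permTensor_swap_permTensor_swap, sub_add_cancel]

lemma cherednikOp_permTensor_swap_right (hj : (j : ℕ) = i + 1)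
    (f : B →₀ MvPolynomial (Fin (n + 1)) K) :
    cherednikOp ρ α j (permTensor ρ (Equiv.swap i j) f) =
      permTensor ρ (Equiv.swap i j) (cherednikOp ρ α i f) - α⁻¹ • f := by
  have hij : i ≠ j := Fin.ne_of_val_ne (by omega)
  have ht (m : Fin (n + 1)) :
      m < j ↔ Equiv.swap i j m ∈ insert j (Finset.univ.filter (· < i)) := by
    rw [← Finset.mem_filter_univ (p := (· < j)), filter_lt_eq_insert_of_val_eq_succ hj]
    simp [Equiv.swap_apply_eq_iff, swap_lt_iff_of_val_eq_succ hj hij]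
  rw [cherednikOp_permTensor ρ α (Equiv.swap i j) j ht, Equiv.swap_apply_right,
    Finset.sum_insert (by simp only [Finset.mem_filter_univ, not_lt, Fin.le_def]; omega),
    smul_add, sub_add_eq_sub_sub_swap,
    permTensor_sub ρ _ _ (α⁻¹ • permTensor ρ (Equiv.swap i j) f), permTensor_smul,
    permTensor_swap_permTensor_swap, cherednikOp]

lemma cherednikOp_permTensor_swap_of_ne (hj : (j : ℕ) = i + 1) {k : Fin (n + 1)}
    (hki : k ≠ i) (hkj : k ≠ j) (f : B →₀ MvPolynomial (Fin (n + 1)) K) :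
    cherednikOp ρ α k (permTensor ρ (Equiv.swap i j) f) =
      permTensor ρ (Equiv.swap i j) (cherednikOp ρ α k f) := by
  rw [cherednikOp_permTensor ρ α (Equiv.swap i j) k (t := Finset.univ.filter (· < k))
      (fun m => by simpa using (swap_lt_iff_of_val_eq_succ hj hkj m).symm),
    Equiv.swap_apply_of_ne_of_ne hki hkj, cherednikOp]

end AdjacentTransposition

/-- Operators act on the right: `(s_i ⊗ s_i) ξ̃_i` means first `s_i ⊗ s_i`, then `ξ̃_i`. -/
theorem xiOp_hecke_relations (ρ : Representation K (Equiv.Perm (Fin (n + 1))) (B →₀ K))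
    (α : K) (hα : α ≠ 0) (i j : Fin (n + 1)) (hj : (j : ℕ) = (i : ℕ) + 1) :
    (∀ f : B →₀ MvPolynomial (Fin (n + 1)) K,
      xiOp ρ α i (permTensor ρ (Equiv.swap i j) f) =
        permTensor ρ (Equiv.swap i j) (xiOp ρ α j f) + f) ∧
    (∀ f : B →₀ MvPolynomial (Fin (n + 1)) K,
      xiOp ρ α j (permTensor ρ (Equiv.swap i j) f) =
        permTensor ρ (Equiv.swap i j) (xiOp ρ α i f) - f) ∧
    (∀ k : Fin (n + 1), k ≠ i → k ≠ j →
      ∀ f : B →₀ MvPolynomial (Fin (n + 1)) K,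
        xiOp ρ α k (permTensor ρ (Equiv.swap i j) f) =
          permTensor ρ (Equiv.swap i j) (xiOp ρ α k f)) := by
  refine ⟨fun f => ?_, fun f => ?_, fun k hki hkj f => ?_⟩
  · rw [xiOp, cherednikOp_permTensor_swap_left ρ α hj, xiOp, permTensor_sub, permTensor_smul,
      permTensor_smul, smul_add, smul_smul, mul_inv_cancel₀ hα, one_smul]
    abel
  · rw [xiOp, cherednikOp_permTensor_swap_right ρ α hj, xiOp, permTensor_sub, permTensor_smul,
      permTensor_smul, smul_sub, smul_smul, mul_inv_cancel₀ hα, one_smul]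
    abel
  · rw [xiOp, cherednikOp_permTensor_swap_of_ne ρ α hj hki hkj, xiOp, permTensor_sub,
      permTensor_smul, permTensor_smul]
end

section
/- Let (τ, ζ, v, σ) and (τ', ζ', v', σ') be two vertices of the graph H_λ (the graph G_λ with affine edges removed). They lie in the same connected component if and only if T(τ, v) = T(τ', v'), where T(τ, v) is the filling of the shape λ obtained by replacing each entry i of τ by v⁺[i]. -/
/-- The edges of the graph `H_λ`: the graph `G_λ` with the affine edges (and
falls) removed, i.e. only the steps and the correct jumps. -/
inductive HStep (n : ℕ) (D : Finset (ℕ × ℕ)) : YBVertex n → YBVertex n → Prop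
  | step (τ : Fin (n + 1) → ℕ × ℕ) (ζ : Fin (n + 1) → Polynomial ℤ)
      (v : Fin (n + 1) → ℕ) (σ : Equiv.Perm (Fin (n + 1)))
      (i j : Fin (n + 1)) (hj : (j : ℕ) = (i : ℕ) + 1) (hlt : v i < v j) :
      HStep n D (τ, ζ, v, σ)
        (τ, fun k => ζ (Equiv.swap i j k), fun k => v (Equiv.swap i j k),
          σ * Equiv.swap i j)
  | jump (τ : Fin (n + 1) → ℕ × ℕ) (ζ : Fin (n + 1) → Polynomial ℤ)
      (v : Fin (n + 1) → ℕ) (σ : Equiv.Perm (Fin (n + 1)))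
      (i j : Fin (n + 1)) (hj : (j : ℕ) = (i : ℕ) + 1) (heq : v i = v j)
      (hse : tabContent τ (σ j) + 2 ≤ tabContent τ (σ i))
      (hrst : IsRST n D (swapEntries τ (σ i) (σ j))) :
      HStep n D (τ, ζ, v, σ)
        (swapEntries τ (σ i) (σ j), fun k => ζ (Equiv.swap i j k), v, σ)

/-- The filling `T(τ, v)` of the diagram obtained by replacing each entry `i`
of `τ` by `v⁺[i]` (here `w = v⁺` is the decreasing rearrangement of `v`),
given as a function from boxes to values (and `0` off the diagram). -/
def Tfill {n : ℕ} (pos : Fin (n + 1) → ℕ × ℕ) (w : Fin (n + 1) → ℕ) :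
    ℕ × ℕ → ℕ :=
  fun b => ∑ i, if pos i = b then w i else 0

/-!
Every vertex reachable from the root satisfies an invariant: its tableau is reverse standard,
`σ = σ_v`, `ζ` is the spectral vector of `(τ, v)`, and the entries of every rigid pair of boxes
(same row, same column, or contents differing by at most one) are ordered as in `τ₀`.

Steps fix `τ` and `v⁺ = v ∘ σ⁻¹`, and jumps exchange two entries carrying the same value of
`v⁺`, so `T(τ, v)` is constant on components. Conversely, steps sort every vertex to
`(τ, CT_τ + v⁺ α, v⁺, id)`. If `T(τ₁, v₁) = T(τ₂, v₂)`, then `v₁⁺ = v₂⁺` and `τ₁ = τ₂ ∘ g`, where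
`g` preserves `v⁺` and the order of rigid pairs. Bubble-sorting `g` then only exchanges, at a
descent, two entries of equal weight in a non-rigid pair of boxes: a correct jump in one
direction or the other.
-/

open Equiv Finset

section AdjacentSwaps

variable {N : ℕ}

lemma swap_lt_swap_iff_of_adjacent {i j x y : Fin N} (hj : (j : ℕ) = i + 1)
    (hij : ¬(x = i ∧ y = j)) (hji : ¬(x = j ∧ y = i)) :
    swap i j x < swap i j y ↔ x < y := by
  simp only [swap_apply_def, Fin.lt_def, Fin.ext_iff] at *
  split_ifs <;> omega

variable {α : Type*} [LinearOrder α]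

def ascents (f : Fin N → α) : Finset (Fin N × Fin N) :=
  {p | p.1 < p.2 ∧ f p.1 < f p.2}

lemma card_ascents_comp_swap_lt {f : Fin N → α} {i j : Fin N} (hj : (j : ℕ) = i + 1)
    (hf : f i < f j) : #(ascents fun k => f (swap i j k)) < #(ascents f) := by
  have hij : i < j := by simp [Fin.lt_def, hj]
  let s : Fin N × Fin N → Fin N × Fin N := fun p => (swap i j p.1, swap i j p.2)
  have hmaps : ∀ p ∈ ascents (fun k => f (swap i j k)), s p ∈ (ascents f).erase (i, j) := by
    rintro ⟨x, y⟩ hp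
    simp only [ascents, mem_filter, mem_univ, true_and, mem_erase, ne_eq, Prod.ext_iff,
      s] at hp ⊢
    have hxy : ¬(x = i ∧ y = j) := by
      rintro ⟨rfl, rfl⟩
      simp only [swap_apply_left, swap_apply_right] at hp
      exact lt_asymm hf hp.2
    have hyx : ¬(x = j ∧ y = i) := by rintro ⟨rfl, rfl⟩; exact lt_asymm hij hp.1
    refine ⟨fun h => hyx ?_, (swap_lt_swap_iff_of_adjacent hj hxy hyx).2 hp.1, hp.2⟩
    rwa [swap_apply_eq_iff, swap_apply_eq_iff, swap_apply_left, swap_apply_right] at h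
  have hinj : Set.InjOn s (ascents fun k => f (swap i j k)) := fun p _ q _ h => by
    simpa [s, Prod.ext_iff] using h
  calc #(ascents fun k => f (swap i j k))
      ≤ #((ascents f).erase (i, j)) := card_le_card_of_injOn s (fun p hp => hmaps p hp) hinj
    _ < #(ascents f) := card_erase_lt_of_mem (by simp [ascents, hij, hf])

theorem Fin.antitone_induction {motive : (Fin N → α) → Prop}
    (antitone : ∀ f, Antitone f → motive f)
    (swap_ascent : ∀ f (i j : Fin N), (j : ℕ) = i + 1 → f i < f j →
      motive (fun k => f (swap i j k)) → motive f)
    (f : Fin N → α) : motive f := by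
  induction hc : #(ascents f) using Nat.strong_induction_on generalizing f with
  | _ c ih =>
    by_cases h : ∃ i j : Fin N, (j : ℕ) = i + 1 ∧ f i < f j
    · obtain ⟨i, j, hj, hf⟩ := h
      exact swap_ascent f i j hj hf (ih _ (hc ▸ card_ascents_comp_swap_lt hj hf) _ rfl)
    · push Not at h
      refine antitone f ?_
      obtain _ | n := N
      · exact fun a => a.elim0
      · exact Fin.antitone_iff_succ_le.2 fun k => h _ _ (by simp)

lemma Equiv.Perm.eq_one_of_monotone {g : Perm (Fin N)} (hg : Monotone g) : g = 1 :=
  DFunLike.coe_injective (Tuple.unique_monotone (f := id) hg monotone_id)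

lemma eq_of_antitone_of_comp_perm {u v : Fin N → α} (hu : Antitone u) (hv : Antitone v)
    (ρ : Perm (Fin N)) (h : u = v ∘ ρ) : u = v := by
  subst h
  exact Tuple.unique_antitone (σ := ρ) (τ := 1) hu hv

end AdjacentSwaps

section Tableaux

variable {N : ℕ}

def boxContent (b : ℕ × ℕ) : ℤ := b.2 - b.1

lemma tabContent_eq_boxContent {n : ℕ} (τ : Fin (n + 1) → ℕ × ℕ) (a : Fin (n + 1)) :
    tabContent τ a = boxContent (τ a) := rfl

/-- No correct jump can exchange the entries of a rigid pair of boxes. -/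
def RigidPair (β γ : ℕ × ℕ) : Prop :=
  β.1 = γ.1 ∨ β.2 = γ.2 ∨ |boxContent β - boxContent γ| ≤ 1

lemma RigidPair.symm {β γ : ℕ × ℕ} (h : RigidPair β γ) : RigidPair γ β := by
  rcases h with h | h | h
  · exact .inl h.symm
  · exact .inr (.inl h.symm)
  · exact .inr (.inr (by rwa [abs_sub_comm]))

def StrictMonoOnRigid (τ : Fin N → ℕ × ℕ) (g : Fin N → Fin N) : Prop :=
  ∀ a b, a < b → RigidPair (τ a) (τ b) → g a < g b

lemma StrictMonoOnRigid.comp_swap {τ : Fin N → ℕ × ℕ} {g : Fin N → Fin N} {i j : Fin N}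
    (h : StrictMonoOnRigid τ g) (hj : (j : ℕ) = i + 1) (hij : ¬RigidPair (τ i) (τ j)) :
    StrictMonoOnRigid (fun k => τ (swap i j k)) (fun k => g (swap i j k)) := by
  intro x y hxy hr
  have hxy' : ¬(x = i ∧ y = j) := by
    rintro ⟨rfl, rfl⟩
    exact hij (by simpa using hr.symm)
  have hyx : ¬(x = j ∧ y = i) := by
    rintro ⟨rfl, rfl⟩
    rw [Fin.lt_def] at hxy
    omega
  exact h _ _ ((swap_lt_swap_iff_of_adjacent hj hxy' hyx).2 hxy) hr

lemma StrictMonoOnRigid.trans_symm {τ₀ τ₁ τ₂ : Fin N → ℕ × ℕ} {π₁ π₂ : Perm (Fin N)}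
    (hτ₁ : ∀ a, τ₁ a = τ₀ (π₁ a)) (hτ₂ : ∀ a, τ₂ a = τ₀ (π₂ a))
    (h₁ : StrictMonoOnRigid τ₁ π₁) (h₂ : StrictMonoOnRigid τ₂ π₂) :
    StrictMonoOnRigid τ₁ (π₁.trans π₂.symm) := by
  intro a b hab hr
  have hτ : ∀ c, τ₂ (π₂.symm (π₁ c)) = τ₁ c := by simp [hτ₁, hτ₂]
  by_contra hba
  have hba : π₂.symm (π₁ b) < π₂.symm (π₁ a) :=
    (not_lt.1 hba).lt_of_ne (by simpa using hab.ne')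
  have := h₂ _ _ hba (by rw [hτ, hτ]; exact hr.symm)
  simp only [Equiv.apply_symm_apply] at this
  exact (h₁ a b hab hr).asymm this

/-- With `(ℓ, m) = (row, column)` and `(column, row)` these are the two monotonicity conditions
of a reverse standard tableau. -/
def DecreasingAlong (ℓ m : ℕ × ℕ → ℕ) (τ : Fin N → ℕ × ℕ) : Prop :=
  ∀ a b, ℓ (τ a) = ℓ (τ b) → m (τ a) < m (τ b) → b < a

variable {ℓ m : ℕ × ℕ → ℕ} {τ : Fin N → ℕ × ℕ}

lemma DecreasingAlong.comp_swap (h : DecreasingAlong ℓ m τ) {i j : Fin N}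
    (hj : (j : ℕ) = i + 1) (hij : ℓ (τ i) ≠ ℓ (τ j)) :
    DecreasingAlong ℓ m (fun k => τ (swap i j k)) := by
  intro x y hℓ hm
  have hyx : ¬(y = i ∧ x = j) := by rintro ⟨rfl, rfl⟩; simp_all
  have hxy : ¬(y = j ∧ x = i) := by rintro ⟨rfl, rfl⟩; simp_all
  exact (swap_lt_swap_iff_of_adjacent hj hyx hxy).1 (h _ _ hℓ hm)

lemma DecreasingAlong.eq_of_comp_swap (h : DecreasingAlong ℓ m τ) {a b : Fin N}
    (h' : DecreasingAlong ℓ m (fun k => τ (swap a b k))) (hℓ : ℓ (τ a) = ℓ (τ b)) :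
    m (τ a) = m (τ b) := by
  by_contra hm
  rcases Ne.lt_or_gt hm with hm | hm
  · exact (h a b hℓ hm).asymm (h' b a (by simpa using hℓ) (by simpa using hm))
  · exact (h b a hℓ.symm hm).asymm (h' a b (by simpa using hℓ.symm) (by simpa using hm))

end Tableaux

section ReverseStandardTableaux

variable {n : ℕ} {D : Finset (ℕ × ℕ)} {τ : Fin (n + 1) → ℕ × ℕ}

lemma swapEntries_swapEntries (τ : Fin (n + 1) → ℕ × ℕ) (a b : Fin (n + 1)) :
    swapEntries (swapEntries τ a b) a b = τ := by
  funext k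
  simp [swapEntries]

lemma IsRST.swapEntries_of_not_rigidPair {i j : Fin (n + 1)} (h : IsRST n D τ)
    (hj : (j : ℕ) = i + 1) (hij : ¬RigidPair (τ i) (τ j)) :
    IsRST n D (swapEntries τ i j) := by
  obtain ⟨hinj, hmem, hsurj, hrows, hcols⟩ := h
  refine ⟨hinj.comp (swap i j).injective, fun k => hmem _, fun b hb => ?_,
    DecreasingAlong.comp_swap (ℓ := Prod.fst) (m := Prod.snd) hrows hj fun h => hij (.inl h),
    DecreasingAlong.comp_swap (ℓ := Prod.snd) (m := Prod.fst) hcols hj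
      fun h => hij (.inr (.inl h))⟩
  obtain ⟨k, rfl⟩ := hsurj b hb
  exact ⟨swap i j k, by simp [swapEntries]⟩

lemma IsRST.not_rigidPair_of_swapEntries {a b : Fin (n + 1)} (h : IsRST n D τ)
    (h' : IsRST n D (swapEntries τ a b)) (hab : a ≠ b)
    (hct : tabContent τ b + 2 ≤ tabContent τ a) : ¬RigidPair (τ a) (τ b) := by
  have hne : τ a ≠ τ b := h.1.ne hab
  rintro (hr | hc | hc)
  · exact hne (Prod.ext hr (DecreasingAlong.eq_of_comp_swap (ℓ := Prod.fst) (m := Prod.snd)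
      h.2.2.2.1 h'.2.2.2.1 hr))
  · exact hne (Prod.ext (DecreasingAlong.eq_of_comp_swap (ℓ := Prod.snd) (m := Prod.fst)
      h.2.2.2.2 h'.2.2.2.2 hc) hc)
  · rw [tabContent_eq_boxContent, tabContent_eq_boxContent] at hct
    linarith [(abs_le.1 hc).2]

end ReverseStandardTableaux

section Filling

variable {n : ℕ}

lemma Tfill_apply_of_injective {τ : Fin (n + 1) → ℕ × ℕ} (hτ : Function.Injective τ)
    (w : Fin (n + 1) → ℕ) (a : Fin (n + 1)) : Tfill τ w (τ a) = w a := by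
  simp [Tfill, hτ.eq_iff]

lemma Tfill_comp_perm (τ : Fin (n + 1) → ℕ × ℕ) (w : Fin (n + 1) → ℕ) (π : Perm (Fin (n + 1))) :
    Tfill (fun k => τ (π k)) (fun k => w (π k)) = Tfill τ w :=
  funext fun b => Equiv.sum_comp π fun i => if τ i = b then w i else 0

end Filling

section StableSort

variable {N : ℕ} {α : Type*} [LinearOrder α] {v : Fin N → α} {σ : Perm (Fin N)}

/-- `σ` ranks the positions of `v` by decreasing value, ties broken by position: this is the
permutation `σ_v` of the paper, the shortest one with `v = v⁺ ∘ σ_v`. -/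
def IsStableSortPerm (v : Fin N → α) (σ : Perm (Fin N)) : Prop :=
  ∀ i j, σ i < σ j ↔ v j < v i ∨ v i = v j ∧ i < j

lemma IsStableSortPerm.antitone_comp_inv (h : IsStableSortPerm v σ) :
    Antitone fun k => v (σ⁻¹ k) := by
  intro a b hab
  rcases hab.lt_or_eq with hab | rfl
  · rcases (h (σ⁻¹ a) (σ⁻¹ b)).1 (by simpa using hab) with h | h
    exacts [h.le, h.1.ge]
  · rfl

lemma IsStableSortPerm.eq_one (h : IsStableSortPerm v σ) (hv : Antitone v) : σ = 1 := by
  refine Perm.eq_one_of_monotone (StrictMono.monotone fun i j hij => (h i j).2 ?_)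
  rcases (hv hij.le).lt_or_eq with h | h
  exacts [.inl h, .inr ⟨h.symm, hij⟩]

lemma IsStableSortPerm.apply_of_adjacent (h : IsStableSortPerm v σ) {i j : Fin N}
    (hj : (j : ℕ) = i + 1) (hv : v i = v j) : (σ j : ℕ) = σ i + 1 := by
  have hij : σ i < σ j := (h i j).2 (.inr ⟨hv, by rw [Fin.lt_def]; omega⟩)
  rw [Fin.lt_def] at hij
  by_contra hne
  obtain ⟨k, hk⟩ := σ.surjective ⟨σ i + 1, by omega⟩
  have hik := (h i k).1 (by rw [Fin.lt_def, hk]; simp)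
  have hkj := (h k j).1 (by rw [Fin.lt_def, hk]; simp; omega)
  rcases hik with hik | ⟨hik, hik'⟩ <;> rcases hkj with hkj | ⟨hkj, hkj'⟩
  all_goals first | order | (rw [Fin.lt_def] at hik' hkj'; omega)

lemma IsStableSortPerm.comp_swap_of_lt (h : IsStableSortPerm v σ) {i j : Fin N}
    (hj : (j : ℕ) = i + 1) (hlt : v i < v j) :
    IsStableSortPerm (fun k => v (swap i j k)) (σ * swap i j) := by
  intro x y
  rw [Perm.mul_apply, Perm.mul_apply, h]
  by_cases hxy : x = i ∧ y = j
  · obtain ⟨rfl, rfl⟩ := hxy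
    simp [hlt, hlt.ne']
  by_cases hyx : x = j ∧ y = i
  · obtain ⟨rfl, rfl⟩ := hyx
    simp [hlt.ne, hlt.not_gt]
  rw [swap_lt_swap_iff_of_adjacent hj hxy hyx]

end StableSort

section AffineMove

variable {n : ℕ}

lemma vPsi_apply (v : Fin (n + 1) → ℕ) (k : Fin (n + 1)) :
    vPsi v k = v (finRotate (n + 1) k) + if k = Fin.last n then 1 else 0 := by
  by_cases hk : k = Fin.last n
  · subst hk
    simp [vPsi]
  · have h : (k : ℕ) + 1 < n + 1 := by have := Fin.val_lt_last hk; omega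
    simp only [vPsi, h, hk, dif_pos, if_false, add_zero]
    congr 1
    ext
    exact (coe_finRotate_of_ne_last hk).symm

lemma zetaPsi_apply (ζ : Fin (n + 1) → Polynomial ℤ) (k : Fin (n + 1)) :
    zetaPsi ζ k = ζ (finRotate (n + 1) k) + if k = Fin.last n then Polynomial.X else 0 := by
  by_cases hk : k = Fin.last n
  · subst hk
    simp [zetaPsi]
  · have h : (k : ℕ) + 1 < n + 1 := by have := Fin.val_lt_last hk; omega
    simp only [zetaPsi, h, hk, dif_pos, if_false, add_zero]
    congr 1
    ext
    exact (coe_finRotate_of_ne_last hk).symm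

lemma IsStableSortPerm.vPsi {v : Fin (n + 1) → ℕ} {σ : Perm (Fin (n + 1))}
    (h : IsStableSortPerm v σ) : IsStableSortPerm (vPsi v) (σ * finRotate (n + 1)) := by
  intro x y
  rw [Perm.mul_apply, Perm.mul_apply, h, vPsi_apply, vPsi_apply, Fin.lt_def, Fin.lt_def,
    coe_finRotate, coe_finRotate]
  rcases eq_or_ne x y with rfl | hxy
  · simp
  have := Fin.val_ne_of_ne hxy
  have := Fin.is_le x
  have := Fin.is_le y
  simp only [Fin.ext_iff, Fin.val_last]
  split_ifs <;> omega

end AffineMove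

section Invariant

open Polynomial

variable {n : ℕ} {D : Finset (ℕ × ℕ)} {τ0 : Fin (n + 1) → ℕ × ℕ}

/-- Properties of all vertices reachable from the root. `ζ` is the spectral vector
`ζ[k] = CT_τ[σ k] + v[k] α`; and as jumps only exchange the entries of non-rigid pairs of
boxes, every tableau orders the entries of a rigid pair as `τ0` does. -/
structure VertexInvariant (D : Finset (ℕ × ℕ)) (τ0 : Fin (n + 1) → ℕ × ℕ)
    (V : YBVertex n) : Prop where
  isRST : IsRST n D V.1
  isStableSortPerm : IsStableSortPerm V.2.2.1 V.2.2.2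
  spectral : ∀ k, V.2.1 k = C (tabContent V.1 (V.2.2.2 k)) + C (V.2.2.1 k : ℤ) * X
  rigid : ∃ π : Perm (Fin (n + 1)), (∀ a, V.1 a = τ0 (π a)) ∧ StrictMonoOnRigid V.1 π

lemma VertexInvariant.root (h0 : IsRST n D τ0) : VertexInvariant D τ0 (rootVertex τ0) where
  isRST := h0
  isStableSortPerm i j := by simp [rootVertex]
  spectral k := by simp [rootVertex]
  rigid := ⟨1, fun _ => rfl, fun _ _ h _ => h⟩

lemma VertexInvariant.of_gStep {V W : YBVertex n} (hV : VertexInvariant D τ0 V)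
    (h : GStep n D V W) : VertexInvariant D τ0 W := by
  obtain ⟨hrst, hσ, hζ, π, hπ, hmono⟩ := hV
  cases h with
  | step τ ζ v σ i j hj hlt =>
    exact ⟨hrst, hσ.comp_swap_of_lt hj hlt, fun k => hζ (swap i j k), π, hπ, hmono⟩
  | jump τ ζ v σ i j hj heq hse hrst' =>
    have hij : σ i ≠ σ j := σ.injective.ne fun h => by simp [h] at hj
    refine ⟨hrst', hσ, fun k => ?_, (swap (σ i) (σ j)).trans π, fun a => hπ _,
      hmono.comp_swap (hσ.apply_of_adjacent hj heq)
        (hrst.not_rigidPair_of_swapEntries hrst' hij hse)⟩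
    dsimp only at hζ ⊢
    rw [hζ, apply_swap_eq_self heq]
    simp [tabContent, swapEntries, swap_apply_apply]
  | affine τ ζ v σ =>
    refine ⟨hrst, hσ.vPsi, fun k => ?_, π, hπ, hmono⟩
    dsimp only at hζ ⊢
    rw [zetaPsi_apply, vPsi_apply, hζ]
    split_ifs <;> simp [add_mul, add_assoc]

lemma VertexInvariant.of_reflTransGen (h0 : IsRST n D τ0) {V : YBVertex n}
    (h : Relation.ReflTransGen (GStep n D) (rootVertex τ0) V) : VertexInvariant D τ0 V := by
  induction h with
  | refl => exact .root h0
  | tail _ h ih => exact ih.of_gStep h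

/-- The decreasing rearrangement `v⁺ = v ∘ σ⁻¹` of the weight. -/
def sortedWeight (V : YBVertex n) (k : Fin (n + 1)) : ℕ := V.2.2.1 (V.2.2.2⁻¹ k)

lemma VertexInvariant.antitone_sortedWeight {V : YBVertex n} (hV : VertexInvariant D τ0 V) :
    Antitone (sortedWeight V) :=
  hV.isStableSortPerm.antitone_comp_inv

lemma VertexInvariant.sortedWeight_eq {V : YBVertex n} (hV : VertexInvariant D τ0 V)
    {w : Fin (n + 1) → ℕ} (hw : Antitone w)
    (hv : ∃ π : Perm (Fin (n + 1)), V.2.2.1 = fun k => w (π k)) :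
    sortedWeight V = w := by
  obtain ⟨π, hπ⟩ := hv
  exact eq_of_antitone_of_comp_perm hV.antitone_sortedWeight hw
    (V.2.2.2⁻¹.trans π) (funext fun k => by simp [sortedWeight, hπ, Perm.inv_def])

lemma sortedWeight_step (τ τ' : Fin (n + 1) → ℕ × ℕ) (ζ ζ' : Fin (n + 1) → ℤ[X])
    (v : Fin (n + 1) → ℕ) (σ : Perm (Fin (n + 1))) (i j : Fin (n + 1)) :
    sortedWeight (τ', ζ', fun k => v (swap i j k), σ * swap i j) = sortedWeight (τ, ζ, v, σ) := by
  funext k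
  simp [sortedWeight, mul_inv_rev, swap_inv]

lemma HStep.Tfill_sortedWeight_eq {V W : YBVertex n} (h : HStep n D V W) :
    Tfill V.1 (sortedWeight V) = Tfill W.1 (sortedWeight W) := by
  cases h with
  | step τ ζ v σ i j hj hlt => rw [sortedWeight_step τ τ ζ]
  | jump τ ζ v σ i j hj heq hse hrst =>
    refine (Tfill_comp_perm τ _ (swap (σ i) (σ j))).symm.trans ?_
    congr 1
    funext k
    exact apply_swap_eq_self (by simpa [sortedWeight] using heq) k

abbrev HConnected (n : ℕ) (D : Finset (ℕ × ℕ)) : YBVertex n → YBVertex n → Prop :=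
  Relation.ReflTransGen fun a b => HStep n D a b ∨ HStep n D b a

lemma HConnected.symm {V W : YBVertex n} (h : HConnected n D V W) : HConnected n D W V := by
  induction h with
  | refl => rfl
  | tail _ h ih => exact ih.head h.symm

lemma HConnected.of_reflTransGen {V W : YBVertex n}
    (h : Relation.ReflTransGen (HStep n D) V W) : HConnected n D V W :=
  Relation.ReflTransGen.mono (fun _ _ => Or.inl) _ _ h

lemma HConnected.Tfill_sortedWeight_eq {V W : YBVertex n} (h : HConnected n D V W) :
    Tfill V.1 (sortedWeight V) = Tfill W.1 (sortedWeight W) := by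
  induction h with
  | refl => rfl
  | tail _ h ih => exact ih.trans (h.elim (·.Tfill_sortedWeight_eq) (·.Tfill_sortedWeight_eq.symm))

noncomputable def sortedVertex (τ : Fin (n + 1) → ℕ × ℕ) (w : Fin (n + 1) → ℕ) : YBVertex n :=
  (τ, fun k => C (tabContent τ k) + C (w k : ℤ) * X, w, 1)

lemma VertexInvariant.reflTransGen_sortedVertex {V : YBVertex n}
    (hV : VertexInvariant D τ0 V) :
    Relation.ReflTransGen (HStep n D) V (sortedVertex V.1 (sortedWeight V)) := by
  obtain ⟨τ, ζ, v, σ⟩ := V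
  induction v using Fin.antitone_induction generalizing ζ σ with
  | antitone v hv =>
    obtain rfl := hV.isStableSortPerm.eq_one hv
    have hv : sortedWeight (τ, ζ, v, 1) = v := funext fun k => by simp [sortedWeight]
    obtain rfl : ζ = fun k => C (tabContent τ k) + C (v k : ℤ) * X := funext hV.spectral
    rw [hv]
    rfl
  | swap_ascent v i j hj hlt ih =>
    have hW := hV.of_gStep (GStep.step τ ζ v σ i j hj hlt)
    refine .head (HStep.step τ ζ v σ i j hj hlt) ?_
    rw [← sortedWeight_step τ τ ζ (fun k => ζ (swap i j k))]
    exact ih _ _ hW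

lemma HStep.sortedVertex_swapEntries {τ : Fin (n + 1) → ℕ × ℕ} {w : Fin (n + 1) → ℕ}
    {i j : Fin (n + 1)} (hj : (j : ℕ) = i + 1) (hw : w i = w j)
    (hct : tabContent τ j + 2 ≤ tabContent τ i) (hrst : IsRST n D (swapEntries τ i j)) :
    HStep n D (sortedVertex τ w) (sortedVertex (swapEntries τ i j) w) := by
  have hζ : (fun k => C (tabContent (swapEntries τ i j) k) + C (w k : ℤ) * X) =
      fun k => C (tabContent τ (swap i j k)) + C (w (swap i j k) : ℤ) * X := by
    simp only [apply_swap_eq_self hw]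
    rfl
  unfold sortedVertex
  rw [hζ]
  exact HStep.jump τ _ w 1 i j hj hw hct hrst

lemma HConnected.sortedVertex_swapEntries {τ : Fin (n + 1) → ℕ × ℕ} {w : Fin (n + 1) → ℕ}
    {i j : Fin (n + 1)} (hj : (j : ℕ) = i + 1) (hw : w i = w j) (hrst : IsRST n D τ)
    (hij : ¬RigidPair (τ i) (τ j)) :
    HConnected n D (sortedVertex τ w) (sortedVertex (swapEntries τ i j) w) := by
  have hrst' := hrst.swapEntries_of_not_rigidPair hj hij
  have hct : 2 ≤ |tabContent τ i - tabContent τ j| := by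
    by_contra h
    exact hij (.inr (.inr (by simp only [tabContent_eq_boxContent] at h; omega)))
  rcases le_abs'.1 hct with hct | hct
  · -- the jump goes from `swapEntries τ i j` back to `τ`
    refine .single (.inr ?_)
    have := HStep.sortedVertex_swapEntries (D := D) (w := w) hj hw (τ := swapEntries τ i j)
      (by simp [tabContent, swapEntries] at hct ⊢; omega) (by rwa [swapEntries_swapEntries])
    rwa [swapEntries_swapEntries] at this
  · exact .single (.inl (HStep.sortedVertex_swapEntries hj hw (by omega) hrst'))

lemma HConnected.sortedVertex_of_strictMonoOnRigid {w : Fin (n + 1) → ℕ} (hw : Antitone w)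
    {τ₁ τ₂ : Fin (n + 1) → ℕ × ℕ} (g : Perm (Fin (n + 1))) (hτ : ∀ a, τ₁ a = τ₂ (g a))
    (hrst : IsRST n D τ₁) (hwg : ∀ a, w (g a) = w a) (hg : StrictMonoOnRigid τ₁ g) :
    HConnected n D (sortedVertex τ₁ w) (sortedVertex τ₂ w) := by
  -- induction on the descents of `g`, which are the ascents of `toDual ∘ g`
  suffices ∀ f : Fin (n + 1) → (Fin (n + 1))ᵒᵈ, ∀ (g : Perm (Fin (n + 1))) τ₁,
      (fun a => OrderDual.toDual (g a)) = f → (∀ a, τ₁ a = τ₂ (g a)) → IsRST n D τ₁ →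
      (∀ a, w (g a) = w a) → StrictMonoOnRigid τ₁ g →
      HConnected n D (sortedVertex τ₁ w) (sortedVertex τ₂ w) from this _ g τ₁ rfl hτ hrst hwg hg
  intro f
  induction f using Fin.antitone_induction with
  | antitone f hf =>
    rintro g τ₁ rfl hτ - - -
    obtain rfl := Perm.eq_one_of_monotone fun a b hab => hf hab
    obtain rfl : τ₁ = τ₂ := funext hτ
    rfl
  | swap_ascent f i j hj hlt ih =>
    rintro g τ₁ rfl hτ hrst hwg hg
    replace hlt : g j < g i := hlt
    have hij : i < j := by rw [Fin.lt_def]; omega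
    have hnr : ¬RigidPair (τ₁ i) (τ₁ j) := fun hr => (hg i j hij hr).not_gt hlt
    have hwij : w i = w j := by
      have := hw hlt.le
      rw [hwg, hwg] at this
      exact le_antisymm this (hw hij.le)
    refine (HConnected.sortedVertex_swapEntries hj hwij hrst hnr).trans
      (ih ((swap i j).trans g) _ rfl (fun a => hτ _) (hrst.swapEntries_of_not_rigidPair hj hnr)
        (fun a => by simp [hwg, apply_swap_eq_self hwij]) (hg.comp_swap hj hnr))

lemma VertexInvariant.hConnected_of_Tfill_eq {V₁ V₂ : YBVertex n}
    (hV₁ : VertexInvariant D τ0 V₁) (hV₂ : VertexInvariant D τ0 V₂)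
    (hT : Tfill V₁.1 (sortedWeight V₁) = Tfill V₂.1 (sortedWeight V₂)) :
    HConnected n D V₁ V₂ := by
  obtain ⟨π₁, hτ₁, hπ₁⟩ := hV₁.rigid
  obtain ⟨π₂, hτ₂, hπ₂⟩ := hV₂.rigid
  set g := π₁.trans π₂.symm
  have hg : ∀ a, V₁.1 a = V₂.1 (g a) := by simp [g, hτ₁, hτ₂]
  have hw : sortedWeight V₁ = sortedWeight V₂ ∘ g := funext fun a => by
    rw [← Tfill_apply_of_injective hV₁.isRST.1 (sortedWeight V₁) a, hT, hg, Function.comp_apply,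
      Tfill_apply_of_injective hV₂.isRST.1]
  have hw' := eq_of_antitone_of_comp_perm hV₁.antitone_sortedWeight hV₂.antitone_sortedWeight g hw
  have hbubble := HConnected.sortedVertex_of_strictMonoOnRigid (D := D)
    hV₂.antitone_sortedWeight g hg hV₁.isRST
    (fun a => (congrFun hw a).symm.trans (congrFun hw' a)) (hπ₁.trans_symm hτ₁ hτ₂ hπ₂)
  have hsort₁ := HConnected.of_reflTransGen hV₁.reflTransGen_sortedVertex
  have hsort₂ := HConnected.of_reflTransGen hV₂.reflTransGen_sortedVertex
  rw [hw'] at hsort₁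
  exact hsort₁.trans (hbubble.trans (HConnected.symm hsort₂))

end Invariant

/-- Two vertices of `G_λ` lie in the same connected component of `H_λ` (the
graph `G_λ` with affine edges removed, connectivity taken undirected) if and
only if `T(τ, v) = T(τ', v')`. -/
theorem HStep_connected_iff_Tfill_eq {n : ℕ} (D : Finset (ℕ × ℕ))
    (τ0 : Fin (n + 1) → ℕ × ℕ) (h0 : IsRST n D τ0)
    (V1 V2 : YBVertex n)
    (h1 : Relation.ReflTransGen (GStep n D) (rootVertex τ0) V1)
    (h2 : Relation.ReflTransGen (GStep n D) (rootVertex τ0) V2)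
    (w1 w2 : Fin (n + 1) → ℕ)
    (hdec1 : ∀ i j : Fin (n + 1), i ≤ j → w1 j ≤ w1 i)
    (horb1 : ∃ π : Equiv.Perm (Fin (n + 1)), V1.2.2.1 = fun k => w1 (π k))
    (hdec2 : ∀ i j : Fin (n + 1), i ≤ j → w2 j ≤ w2 i)
    (horb2 : ∃ π : Equiv.Perm (Fin (n + 1)), V2.2.2.1 = fun k => w2 (π k)) :
    Relation.ReflTransGen (fun a b => HStep n D a b ∨ HStep n D b a) V1 V2 ↔
      Tfill V1.1 w1 = Tfill V2.1 w2 := by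
  have hV1 := VertexInvariant.of_reflTransGen h0 h1
  have hV2 := VertexInvariant.of_reflTransGen h0 h2
  rw [← hV1.sortedWeight_eq hdec1 horb1, ← hV2.sortedWeight_eq hdec2 horb2]
  exact ⟨HConnected.Tfill_sortedWeight_eq, hV1.hConnected_of_Tfill_eq hV2⟩
end
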